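/- arXiv:2302.08871 — 11 statements merged into one kernel-verified Lean document; each statement's English description precedes it below -/
import Mathlib

section
/- Let θ ∈ (0, π/2) and let T be a natural number. Then (1/(T+1)) · Σ_{t=0}^{T} cos(2tθ) ≤ min{1, 4/((T+1)θ)}. (Equivalently, the Cesàro average of cos(2tθ), which equals (cos(2Tθ) − cos(2(T+1)θ) + 1 − cos(2θ))/(2(T+1)(1 − cos(2θ))), is bounded by min{1, 4/((T+1)θ)}.) -/
lemma key (θ : ℝ) (T : ℕ) :
    2 * Real.sin θ * ∑ t ∈ Finset.range (T + 1), Real.cos (2 * (t : ℝ) * θ)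
      = Real.sin ((2 * T + 1) * θ) + Real.sin θ := by
  induction T with
  | zero => simp; ring
  | succ n ih =>
    rw [Finset.sum_range_succ, mul_add, ih]
    have h := Real.sin_sub_sin ((2 * (n + 1 : ℝ) + 1) * θ) ((2 * n + 1) * θ)
    push_cast
    have e1 : ((2 * ((n : ℝ) + 1) + 1) * θ - (2 * n + 1) * θ) / 2 = θ := by ring
    have e2 : ((2 * ((n : ℝ) + 1) + 1) * θ + (2 * n + 1) * θ) / 2 = 2 * (n + 1) * θ := by ring
    rw [e1, e2] at h
    linarith

/-- For θ ∈ (0, π/2) and T : ℕ, the Cesàro average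
(1/(T+1)) · Σ_{t=0}^{T} cos(2tθ) is bounded by min{1, 4/((T+1)θ)}. -/
theorem stmt0 (θ : ℝ) (hθ : θ ∈ Set.Ioo 0 (Real.pi / 2)) (T : ℕ) :
    (1 / ((T : ℝ) + 1)) * ∑ t ∈ Finset.range (T + 1), Real.cos (2 * (t : ℝ) * θ) ≤
      min 1 (4 / (((T : ℝ) + 1) * θ)) := by
  obtain ⟨hθ0, hθ2⟩ := hθ
  have hT : (0:ℝ) < (T : ℝ) + 1 := by positivity
  have hs : 0 < Real.sin θ := Real.sin_pos_of_pos_of_lt_pi hθ0 (lt_trans hθ2 (by linarith [Real.pi_pos]))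
  have hsum1 : ∑ t ∈ Finset.range (T + 1), Real.cos (2 * (t : ℝ) * θ) ≤ (T : ℝ) + 1 := by
    calc ∑ t ∈ Finset.range (T + 1), Real.cos (2 * (t : ℝ) * θ)
        ≤ ∑ t ∈ Finset.range (T + 1), 1 := Finset.sum_le_sum fun i _ => Real.cos_le_one _
      _ = (T : ℝ) + 1 := by simp
  have hsum2 : ∑ t ∈ Finset.range (T + 1), Real.cos (2 * (t : ℝ) * θ) ≤ 1 / Real.sin θ := by
    have h := key θ T
    have hb : Real.sin ((2 * T + 1) * θ) + Real.sin θ ≤ 2 := by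
      have := Real.sin_le_one ((2 * (T:ℝ) + 1) * θ)
      have := Real.sin_le_one θ
      linarith
    rw [le_div_iff₀ hs]
    nlinarith
  refine le_min ?_ ?_
  · rw [one_div, inv_mul_le_iff₀ hT]; linarith
  · have hsin : 2 / Real.pi * θ ≤ Real.sin θ :=
      Real.mul_le_sin hθ0.le hθ2.le
    have hpi : 0 < Real.pi := Real.pi_pos
    have h1 : 1 / Real.sin θ ≤ Real.pi / (2 * θ) := by
      have h2θ : 2 * θ ≤ Real.pi * Real.sin θ := by
        rw [div_mul_eq_mul_div, div_le_iff₀ hpi] at hsin; linarith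
      rw [div_le_div_iff₀ hs (by positivity)]
      linarith
    have h2 : Real.pi / (2 * θ) ≤ 4 / θ / 2 := by
      rw [div_le_div_iff₀ (by positivity) two_pos, div_mul_eq_mul_div, le_div_iff₀ hθ0]
      nlinarith [Real.pi_lt_d2]
    have : (1 / ((T : ℝ) + 1)) * ∑ t ∈ Finset.range (T + 1), Real.cos (2 * (t : ℝ) * θ)
        ≤ (1 / ((T : ℝ) + 1)) * (1 / Real.sin θ) := by
      apply mul_le_mul_of_nonneg_left hsum2 (by positivity)
    calc (1 / ((T : ℝ) + 1)) * ∑ t ∈ Finset.range (T + 1), Real.cos (2 * (t : ℝ) * θ)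
        ≤ (1 / ((T : ℝ) + 1)) * (1 / Real.sin θ) := this
      _ ≤ (1 / ((T : ℝ) + 1)) * (Real.pi / (2 * θ)) :=
          mul_le_mul_of_nonneg_left h1 (by positivity)
      _ ≤ 4 / (((T : ℝ) + 1) * θ) := by
          rw [show (1:ℝ)/((T:ℝ)+1) * (Real.pi/(2*θ)) = Real.pi/(2*(((T:ℝ)+1)*θ)) by
            rw [div_mul_div_comm, one_mul]; ring_nf]
          rw [div_le_div_iff₀ (by positivity) (by positivity)]
          nlinarith [Real.pi_lt_d2, mul_pos hT hθ0]
end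

section
/- With the isometry setup below, let u_1, …, u_ℓ ∈ ℂⁿ be orthonormal vectors, v_1, …, v_ℓ ∈ ℂⁿ unit vectors, and θ_1, …, θ_ℓ ∈ (0, π/2) such that AᴴB v_k = cos(θ_k) u_k and BᴴA u_k = cos(θ_k) v_k for each k. Let ν_1, …, ν_ℓ be real numbers with Σ_k ν_k² = 1 and set z = Σ_k ν_k A u_k. Then for every natural number T with T ≥ 64 Σ_k ν_k²/θ_k one has B(z, T) := (1/(T+1)) Σ_{t=0}^{T} Re⟨z, Wᵗ z⟩ ≤ 1/2. -/
/-! The plane spanned by `a_k = A u_k` and `b_k = B v_k` is invariant under both reflections,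
and `W` acts on it as the rotation by `2 θ_k`. Since `⟨a_j, b_k⟩ = cos θ_k ⟨u_j, u_k⟩`, this gives
`⟨a_j, Wᵗ a_k⟩ = δ_jk cos (2 t θ_k)`, so `Re ⟨z, Wᵗ z⟩ = Σ_k ν_k² cos (2 t θ_k)`. Summing over `t`,
the Dirichlet kernel bound `Σ_{t ≤ T} cos (2 t θ) ≤ 1 / sin θ ≤ 2 / θ` bounds the sum by
`2 Σ_k ν_k² / θ_k ≤ T / 32`. -/

open Matrix Finset

theorem sum_range_cos_two_mul_le {θ : ℝ} (h0 : 0 < θ) (hπ : θ ≤ Real.pi / 2) (n : ℕ) :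
    ∑ t ∈ range n, Real.cos (2 * θ * t) ≤ 2 / θ := by
  have hsin : θ / 2 ≤ Real.sin θ := by
    have : θ / 2 ≤ 2 / Real.pi * θ := by
      rw [div_mul_eq_mul_div, le_div_iff₀ Real.pi_pos]
      nlinarith [Real.pi_le_four]
    linarith [Real.mul_le_sin h0.le hπ]
  have hprod : Real.sin θ * ∑ t ∈ range n, Real.cos (2 * θ * t) ≤ 1 := by
    have h := Real.sin_mul_sum_cos n (2 * θ) 0
    simp only [add_zero, show 2 * θ / 2 = θ by ring] at h
    rw [h]
    exact (le_abs_self _).trans <| (abs_mul _ _).trans_le <|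
      mul_le_one₀ (Real.abs_sin_le_one _) (abs_nonneg _) (Real.abs_cos_le_one _)
  rw [le_div_iff₀ h0]
  rcases le_or_gt (∑ t ∈ range n, Real.cos (2 * θ * t)) 0 with hneg | hpos <;> nlinarith

theorem sum_range_sum_mul_cos_le {ι : Type*} [Fintype ι] {w θ : ι → ℝ} (hw : ∀ k, 0 ≤ w k)
    (hθ : ∀ k, θ k ∈ Set.Ioo 0 (Real.pi / 2)) (n : ℕ) :
    ∑ t ∈ range n, ∑ k, w k * Real.cos (2 * θ k * t) ≤ 2 * ∑ k, w k / θ k := by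
  rw [sum_comm, mul_sum]
  refine sum_le_sum fun k _ => ?_
  calc ∑ t ∈ range n, w k * Real.cos (2 * θ k * t)
      = w k * ∑ t ∈ range n, Real.cos (2 * θ k * t) := (mul_sum _ _ _).symm
    _ ≤ w k * (2 / θ k) :=
      mul_le_mul_of_nonneg_left (sum_range_cos_two_mul_le (hθ k).1 (hθ k).2.le n) (hw k)
    _ = 2 * (w k / θ k) := by ring

variable {R m n : Type*} [Fintype m] [Fintype n]

theorem star_mulVec_dotProduct [CommSemiring R] [StarRing R] (M : Matrix m n R) (x : n → R)
    (y : m → R) : star (M *ᵥ x) ⬝ᵥ y = star x ⬝ᵥ (Mᴴ *ᵥ y) := by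
  rw [star_mulVec, dotProduct_mulVec]

theorem star_sum_smul_dotProduct_mulVec_sum_smul [CommRing R] [StarRing R] {ι : Type*}
    [Fintype ι] [DecidableEq ι] (M : Matrix m m R) (a : ι → m → R) (c ν : ι → R)
    (h : ∀ j k, star (a j) ⬝ᵥ (M *ᵥ a k) = if j = k then c k else 0) :
    star (∑ k, ν k • a k) ⬝ᵥ (M *ᵥ ∑ k, ν k • a k) = ∑ k, star (ν k) * ν k * c k := by
  simp only [mulVec_sum, mulVec_smul, star_sum, star_smul, sum_dotProduct, dotProduct_sum,
    smul_dotProduct, dotProduct_smul, h, smul_eq_mul, mul_ite, mul_zero, sum_ite_eq', mem_univ,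
    if_true]
  exact sum_congr rfl fun k _ => by ring

theorem reflection_mulVec_eq [CommRing R] [StarRing R] [DecidableEq m] {A : Matrix m n R}
    {x : n → R} {y : m → R} {c : R} (h : Aᴴ *ᵥ y = c • x) :
    ((2 : R) • (A * Aᴴ) - 1) *ᵥ y = (2 * c) • (A *ᵥ x) - y := by
  rw [sub_mulVec, one_mulVec, smul_mulVec, ← mulVec_mulVec, h, mulVec_smul, smul_smul]

section Walk

open Complex

variable [DecidableEq m]

-- `sin θ` is cleared from the denominators of the rotation coefficients of `(RB * RA) ^ t`.
theorem sin_smul_pow_mulVec {RA RB : Matrix m m ℂ} {a b : m → ℂ} {θ : ℂ} (hAa : RA *ᵥ a = a)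
    (hAb : RA *ᵥ b = (2 * cos θ) • a - b) (hBa : RB *ᵥ a = (2 * cos θ) • b - a)
    (hBb : RB *ᵥ b = b) (t : ℕ) :
    sin θ • ((RB * RA) ^ t *ᵥ a) = (-sin (2 * θ * t - θ)) • a + sin (2 * θ * t) • b := by
  have hWa : (RB * RA) *ᵥ a = (2 * cos θ) • b - a := by
    rw [← mulVec_mulVec, hAa, hBa]
  have hWb : (RB * RA) *ᵥ b = (4 * cos θ ^ 2 - 1) • b - (2 * cos θ) • a := by
    rw [← mulVec_mulVec, hAb, mulVec_sub, mulVec_smul, hBa, hBb]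
    module
  induction t with
  | zero => simp
  | succ t ih =>
    have hsa : sin (2 * θ * (t + 1 : ℕ) - θ) = sin (2 * θ * t + θ) := by push_cast; ring_nf
    have hsb : sin (2 * θ * (t + 1 : ℕ)) = sin (2 * θ * t + 2 * θ) := by push_cast; ring_nf
    rw [pow_succ', ← mulVec_mulVec, ← mulVec_smul, ih, mulVec_add, mulVec_smul, mulVec_smul,
      hWa, hWb, hsa, hsb]
    simp only [sin_add, sin_sub, sin_two_mul, cos_two_mul]
    module

theorem dotProduct_pow_mulVec_eq_cos_mul {RA RB : Matrix m m ℂ} {a b a' : m → ℂ} {θ : ℂ}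
    (hAa : RA *ᵥ a = a) (hAb : RA *ᵥ b = (2 * cos θ) • a - b)
    (hBa : RB *ᵥ a = (2 * cos θ) • b - a) (hBb : RB *ᵥ b = b) (hθ : sin θ ≠ 0)
    (ha' : star a' ⬝ᵥ b = cos θ * (star a' ⬝ᵥ a)) (t : ℕ) :
    star a' ⬝ᵥ ((RB * RA) ^ t *ᵥ a) = cos (2 * θ * t) * (star a' ⬝ᵥ a) := by
  apply mul_left_cancel₀ hθ
  rw [← smul_eq_mul, ← dotProduct_smul, sin_smul_pow_mulVec hAa hAb hBa hBb, dotProduct_add,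
    dotProduct_smul, dotProduct_smul, ha', smul_eq_mul, smul_eq_mul, sin_sub]
  ring

theorem star_mulVec_dotProduct_walk_pow_mulVec [DecidableEq n] {A B : Matrix m n ℂ}
    (hA : Aᴴ * A = 1) (hB : Bᴴ * B = 1) {u v : n → ℂ} {θ : ℂ} (hθ : sin θ ≠ 0)
    (hABv : (Aᴴ * B) *ᵥ v = cos θ • u) (hBAu : (Bᴴ * A) *ᵥ u = cos θ • v) (u' : n → ℂ)
    (t : ℕ) :
    star (A *ᵥ u') ⬝ᵥ ((((2 : ℂ) • (B * Bᴴ) - 1) * ((2 : ℂ) • (A * Aᴴ) - 1)) ^ t *ᵥ (A *ᵥ u))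
      = cos (2 * θ * t) * (star u' ⬝ᵥ u) := by
  rw [← mulVec_mulVec] at hABv hBAu
  have hAu : Aᴴ *ᵥ (A *ᵥ u) = (1 : ℂ) • u := by rw [mulVec_mulVec, hA, one_mulVec, one_smul]
  have hBv : Bᴴ *ᵥ (B *ᵥ v) = (1 : ℂ) • v := by rw [mulVec_mulVec, hB, one_mulVec, one_smul]
  rw [dotProduct_pow_mulVec_eq_cos_mul (b := B *ᵥ v) (θ := θ)
    (by rw [reflection_mulVec_eq hAu]; module) (by rw [reflection_mulVec_eq hABv])
    (by rw [reflection_mulVec_eq hBAu]) (by rw [reflection_mulVec_eq hBv]; module) hθ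
    (by rw [star_mulVec_dotProduct, star_mulVec_dotProduct, hABv, hAu, dotProduct_smul,
      dotProduct_smul, one_smul, smul_eq_mul]),
    star_mulVec_dotProduct, hAu, one_smul]

end Walk

theorem stmt3_general (n N ℓ : ℕ)
    (A B : Matrix (Fin N) (Fin n) ℂ)
    (hA : Aᴴ * A = 1) (hB : Bᴴ * B = 1)
    (u v : Fin ℓ → Fin n → ℂ)
    (hu : ∀ j k, star (u j) ⬝ᵥ u k = if j = k then 1 else 0)
    (θ : Fin ℓ → ℝ) (hθ : ∀ k, θ k ∈ Set.Ioo 0 (Real.pi / 2))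
    (hABv : ∀ k, (Aᴴ * B) *ᵥ v k = (Real.cos (θ k) : ℂ) • u k)
    (hBAu : ∀ k, (Bᴴ * A) *ᵥ u k = (Real.cos (θ k) : ℂ) • v k)
    (ν : Fin ℓ → ℝ)
    (z : Fin N → ℂ) (hz : z = ∑ k, (ν k : ℂ) • (A *ᵥ u k))
    (W : Matrix (Fin N) (Fin N) ℂ)
    (hW : W = ((2 : ℂ) • (B * Bᴴ) - 1) * ((2 : ℂ) • (A * Aᴴ) - 1))
    (T : ℕ) (hT : (T : ℝ) ≥ 64 * ∑ k, ν k ^ 2 / θ k) :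
    (1 / ((T : ℝ) + 1)) * ∑ t ∈ Finset.range (T + 1),
      (star z ⬝ᵥ ((W ^ t) *ᵥ z)).re ≤ 1 / 2 := by
  have hsin : ∀ k, Complex.sin (θ k) ≠ 0 := fun k => by
    rw [← Complex.ofReal_sin]
    exact Complex.ofReal_ne_zero.2
      (Real.sin_pos_of_pos_of_lt_pi (hθ k).1 (by linarith [(hθ k).2, Real.pi_pos])).ne'
  have hre (t : ℕ) :
      (star z ⬝ᵥ (W ^ t *ᵥ z)).re = ∑ k, ν k ^ 2 * Real.cos (2 * θ k * t) := by
    rw [hz, hW, star_sum_smul_dotProduct_mulVec_sum_smul _ _ (fun k => Complex.cos (2 * θ k * t))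
      _ fun j k => by
        rw [star_mulVec_dotProduct_walk_pow_mulVec hA hB (hsin k)
          (by rw [hABv, Complex.ofReal_cos]) (by rw [hBAu, Complex.ofReal_cos]), hu, mul_ite,
          mul_one, mul_zero],
      Complex.re_sum]
    refine sum_congr rfl fun k _ => ?_
    rw [show (2 * (θ k : ℂ) * t) = ((2 * θ k * t : ℝ) : ℂ) by push_cast; ring,
      ← Complex.ofReal_cos, Complex.star_def, Complex.conj_ofReal, ← Complex.ofReal_mul,
      ← Complex.ofReal_mul, Complex.ofReal_re, sq]
  have hS : 0 ≤ ∑ k, ν k ^ 2 / θ k :=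
    sum_nonneg fun k _ => div_nonneg (sq_nonneg _) (hθ k).1.le
  calc (1 / ((T : ℝ) + 1)) * ∑ t ∈ range (T + 1), _
      = (1 / ((T : ℝ) + 1)) * ∑ t ∈ range (T + 1), ∑ k, ν k ^ 2 * Real.cos (2 * θ k * t) := by
        simp_rw [hre]
    _ ≤ (1 / ((T : ℝ) + 1)) * (2 * ∑ k, ν k ^ 2 / θ k) := by
        gcongr
        exact sum_range_sum_mul_cos_le (fun k => sq_nonneg _) hθ _
    _ ≤ 1 / 2 := by
        rw [one_div_mul_eq_div, div_le_iff₀ (by positivity)]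
        linarith

/-- Szegedy's orbit lemma. With isometries A, B, orthonormal left
singular vectors u_k, unit right singular vectors v_k with singular values
cos θ_k, θ_k ∈ (0, π/2), coefficients ν_k with Σ ν_k² = 1 and
z = Σ ν_k A u_k, for every T ≥ 64 Σ ν_k²/θ_k one has
B(z,T) = (1/(T+1)) Σ_{t=0}^{T} Re⟨z, Wᵗ z⟩ ≤ 1/2. -/
theorem stmt3 (n N ℓ : ℕ) (hn : 0 < n) (hN : 0 < N)
    (A B : Matrix (Fin N) (Fin n) ℂ)
    (hA : Aᴴ * A = 1) (hB : Bᴴ * B = 1)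
    (u v : Fin ℓ → Fin n → ℂ)
    (hu : ∀ j k, star (u j) ⬝ᵥ u k = if j = k then 1 else 0)
    (hv : ∀ k, star (v k) ⬝ᵥ v k = 1)
    (θ : Fin ℓ → ℝ) (hθ : ∀ k, θ k ∈ Set.Ioo 0 (Real.pi / 2))
    (hABv : ∀ k, (Aᴴ * B) *ᵥ v k = (Real.cos (θ k) : ℂ) • u k)
    (hBAu : ∀ k, (Bᴴ * A) *ᵥ u k = (Real.cos (θ k) : ℂ) • v k)
    (ν : Fin ℓ → ℝ) (hν : ∑ k, ν k ^ 2 = 1)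
    (z : Fin N → ℂ) (hz : z = ∑ k, (ν k : ℂ) • (A *ᵥ u k))
    (W : Matrix (Fin N) (Fin N) ℂ)
    (hW : W = ((2 : ℂ) • (B * Bᴴ) - 1) * ((2 : ℂ) • (A * Aᴴ) - 1))
    (T : ℕ) (hT : (T : ℝ) ≥ 64 * ∑ k, ν k ^ 2 / θ k) :
    (1 / ((T : ℝ) + 1)) * ∑ t ∈ Finset.range (T + 1),
      (star z ⬝ᵥ ((W ^ t) *ᵥ z)).re ≤ 1 / 2 :=
  stmt3_general n N ℓ A B hA hB u v hu θ hθ hABv hBAu ν z hz W hW T hT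
end

section
/- With the isometry setup below, let u, v ∈ ℂⁿ be unit vectors and θ ∈ (0, π/2) with AᴴB v = cos(θ) u and BᴴA u = cos(θ) v. Then for every natural number t, ⟨Au, Wᵗ(Au)⟩ = cos(2tθ). In other words, W acts on the plane spanned by Au and Bv as a rotation by the angle 2θ. -/
open Matrix

/-- With isometries A, B, unit vectors u, v and θ ∈ (0, π/2)
satisfying AᴴB v = cos(θ) u and BᴴA u = cos(θ) v, for every t : ℕ one has
⟨Au, Wᵗ(Au)⟩ = cos(2tθ): the walk operator W rotates span{Au, Bv} by 2θ. -/
theorem stmt4 (n N : ℕ) (hn : 0 < n) (hN : 0 < N)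
    (A B : Matrix (Fin N) (Fin n) ℂ)
    (hA : Aᴴ * A = 1) (hB : Bᴴ * B = 1)
    (u v : Fin n → ℂ)
    (hu : star u ⬝ᵥ u = 1) (hv : star v ⬝ᵥ v = 1)
    (θ : ℝ) (hθ : θ ∈ Set.Ioo 0 (Real.pi / 2))
    (hABv : (Aᴴ * B) *ᵥ v = (Real.cos θ : ℂ) • u)
    (hBAu : (Bᴴ * A) *ᵥ u = (Real.cos θ : ℂ) • v)
    (W : Matrix (Fin N) (Fin N) ℂ)
    (hW : W = ((2 : ℂ) • (B * Bᴴ) - 1) * ((2 : ℂ) • (A * Aᴴ) - 1))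
    (t : ℕ) :
    star (A *ᵥ u) ⬝ᵥ ((W ^ t) *ᵥ (A *ᵥ u)) = (Real.cos (2 * (t : ℝ) * θ) : ℂ) := by
  obtain ⟨hθ0, hθ1⟩ := hθ
  have hθpi : θ < Real.pi := lt_trans hθ1 (by linarith [Real.pi_pos])
  have hs : Real.sin θ ≠ 0 := ne_of_gt (Real.sin_pos_of_pos_of_lt_pi hθ0 hθpi)
  set a := A *ᵥ u with ha
  set b := B *ᵥ v with hb
  set c : ℂ := (Real.cos θ : ℂ) with hc
  have hAa : Aᴴ *ᵥ a = u := by rw [ha, Matrix.mulVec_mulVec, hA, Matrix.one_mulVec]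
  have hBb : Bᴴ *ᵥ b = v := by rw [hb, Matrix.mulVec_mulVec, hB, Matrix.one_mulVec]
  have hAb : Aᴴ *ᵥ b = c • u := by rw [hb, Matrix.mulVec_mulVec]; exact hABv
  have hBa : Bᴴ *ᵥ a = c • v := by rw [ha, Matrix.mulVec_mulVec]; exact hBAu
  have hRAa : ((2 : ℂ) • (A * Aᴴ) - 1) *ᵥ a = a := by
    rw [Matrix.sub_mulVec, Matrix.smul_mulVec, Matrix.one_mulVec,
      ← Matrix.mulVec_mulVec, hAa, ← ha]
    module
  have hRAb : ((2 : ℂ) • (A * Aᴴ) - 1) *ᵥ b = (2 * c) • a - b := by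
    rw [Matrix.sub_mulVec, Matrix.smul_mulVec, Matrix.one_mulVec,
      ← Matrix.mulVec_mulVec, hAb, Matrix.mulVec_smul, ← ha]
    module
  have h1 : (B * Bᴴ) *ᵥ a = c • b := by
    rw [← Matrix.mulVec_mulVec, hBa, Matrix.mulVec_smul, ← hb]
  have h2 : (B * Bᴴ) *ᵥ b = b := by
    rw [← Matrix.mulVec_mulVec, hBb, ← hb]
  have hWa : W *ᵥ a = (2 * c) • b - a := by
    rw [hW, ← Matrix.mulVec_mulVec, hRAa, Matrix.sub_mulVec, Matrix.smul_mulVec,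
      Matrix.one_mulVec, h1]
    module
  have hWb : W *ᵥ b = (4 * c ^ 2 - 1) • b - (2 * c) • a := by
    rw [hW, ← Matrix.mulVec_mulVec, hRAb, Matrix.sub_mulVec, Matrix.smul_mulVec,
      Matrix.one_mulVec, Matrix.mulVec_sub, Matrix.mulVec_smul, h1, h2]
    module
  have key : ∀ s : ℕ, (W ^ s) *ᵥ a
      = ((Real.sin ((1 - 2 * (s : ℝ)) * θ) / Real.sin θ : ℝ) : ℂ) • a
        + ((Real.sin (2 * (s : ℝ) * θ) / Real.sin θ : ℝ) : ℂ) • b := by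
    intro s
    induction s with
    | zero =>
      simp [div_self hs]
    | succ s ih =>
      have A1 : Real.sin ((1 - 2 * (s : ℝ)) * θ)
          = Real.sin θ * Real.cos (2 * s * θ) - Real.cos θ * Real.sin (2 * s * θ) := by
        rw [show (1 - 2 * (s : ℝ)) * θ = θ - 2 * s * θ by ring, Real.sin_sub]
      have A2 : Real.sin ((1 - 2 * ((s : ℝ) + 1)) * θ)
          = -(Real.sin θ * Real.cos (2 * s * θ) + Real.cos θ * Real.sin (2 * s * θ)) := by
        rw [show (1 - 2 * ((s : ℝ) + 1)) * θ = -(θ + 2 * s * θ) by ring, Real.sin_neg,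
          Real.sin_add]
      have A3 : Real.sin (2 * ((s : ℝ) + 1) * θ)
          = Real.sin (2 * s * θ) * (Real.cos θ ^ 2 - Real.sin θ ^ 2)
            + Real.cos (2 * s * θ) * (2 * Real.sin θ * Real.cos θ) := by
        rw [show 2 * ((s : ℝ) + 1) * θ = 2 * s * θ + (θ + θ) by ring, Real.sin_add,
          Real.sin_add, Real.cos_add]
        ring
      have id1 : Real.sin ((1 - 2 * ((s : ℝ) + 1)) * θ) / Real.sin θ
          = -(Real.sin ((1 - 2 * (s : ℝ)) * θ) / Real.sin θ)
            - (Real.sin (2 * (s : ℝ) * θ) / Real.sin θ) * (2 * Real.cos θ) := by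
        rw [A1, A2]
        field_simp
        ring
      have id2 : Real.sin (2 * ((s : ℝ) + 1) * θ) / Real.sin θ
          = (Real.sin ((1 - 2 * (s : ℝ)) * θ) / Real.sin θ) * (2 * Real.cos θ)
            + (Real.sin (2 * (s : ℝ) * θ) / Real.sin θ) * (4 * Real.cos θ ^ 2 - 1) := by
        have hpy : Real.sin θ ^ 2 = 1 - Real.cos θ ^ 2 := by
          nlinarith [Real.sin_sq_add_cos_sq θ]
        rw [A1, A3, hpy]
        field_simp
        ring
      have hps : (W ^ (s + 1)) *ᵥ a = W *ᵥ ((W ^ s) *ᵥ a) := by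
        rw [pow_succ', ← Matrix.mulVec_mulVec]
      rw [hps, ih, Matrix.mulVec_add, Matrix.mulVec_smul, Matrix.mulVec_smul, hWa, hWb]
      have hc1 : ((Real.sin ((1 - 2 * ((s : ℝ) + 1)) * θ) / Real.sin θ : ℝ) : ℂ)
          = -((Real.sin ((1 - 2 * (s : ℝ)) * θ) / Real.sin θ : ℝ) : ℂ)
            - ((Real.sin (2 * (s : ℝ) * θ) / Real.sin θ : ℝ) : ℂ) * (2 * c) := by
        rw [hc]
        exact_mod_cast congrArg (Complex.ofReal) id1
      have hc2 : ((Real.sin (2 * ((s : ℝ) + 1) * θ) / Real.sin θ : ℝ) : ℂ)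
          = ((Real.sin ((1 - 2 * (s : ℝ)) * θ) / Real.sin θ : ℝ) : ℂ) * (2 * c)
            + ((Real.sin (2 * (s : ℝ) * θ) / Real.sin θ : ℝ) : ℂ) * (4 * c ^ 2 - 1) := by
        rw [hc]
        exact_mod_cast congrArg (Complex.ofReal) id2
      push_cast only [Nat.cast_succ] at hc1 hc2 ⊢
      rw [hc1, hc2]
      module
  have haa : star a ⬝ᵥ a = 1 := by
    rw [ha, star_mulVec, Matrix.dotProduct_mulVec, Matrix.vecMul_vecMul, hA,
      Matrix.vecMul_one, hu]
  have hab : star a ⬝ᵥ b = c := by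
    rw [ha, hb, star_mulVec, Matrix.dotProduct_mulVec, Matrix.vecMul_vecMul,
      ← Matrix.dotProduct_mulVec, hABv, dotProduct_smul, hu]
    simp [hc]
  rw [key t, dotProduct_add, dotProduct_smul, dotProduct_smul, haa, hab]
  have final : Real.sin ((1 - 2 * (t : ℝ)) * θ) / Real.sin θ
      + Real.sin (2 * (t : ℝ) * θ) / Real.sin θ * Real.cos θ = Real.cos (2 * (t : ℝ) * θ) := by
    rw [show (1 - 2 * (t : ℝ)) * θ = θ - 2 * t * θ by ring, Real.sin_sub]
    field_simp
    ring
  calc ((Real.sin ((1 - 2 * (t : ℝ)) * θ) / Real.sin θ : ℝ) : ℂ) • (1 : ℂ)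
      + ((Real.sin (2 * (t : ℝ) * θ) / Real.sin θ : ℝ) : ℂ) • c
      = ((Real.sin ((1 - 2 * (t : ℝ)) * θ) / Real.sin θ
          + Real.sin (2 * (t : ℝ) * θ) / Real.sin θ * Real.cos θ : ℝ) : ℂ) := by
        simp only [smul_eq_mul, hc]; push_cast; ring
    _ = (Real.cos (2 * (t : ℝ) * θ) : ℂ) := by rw [final]
end

section
/- With the isometry setup below, let u, v ∈ ℂⁿ and σ ∈ ℝ satisfy AᴴB v = σ u and BᴴA u = σ v. Then W(Au) = 2σ Bv − Au and W(Bv) = (4σ² − 1) Bv − 2σ Au. In particular, the subspace span{Au, Bv} of ℂ^{N} is invariant under W. -/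
open Matrix

/-- With isometries A, B and AᴴB v = σ u, BᴴA u = σ v (σ real),
one has W(Au) = 2σ Bv − Au and W(Bv) = (4σ² − 1) Bv − 2σ Au; in particular
span{Au, Bv} is invariant under W. -/
theorem stmt5 (n N : ℕ) (hn : 0 < n) (hN : 0 < N)
    (A B : Matrix (Fin N) (Fin n) ℂ)
    (hA : Aᴴ * A = 1) (hB : Bᴴ * B = 1)
    (u v : Fin n → ℂ) (σ : ℝ)
    (hABv : (Aᴴ * B) *ᵥ v = (σ : ℂ) • u)
    (hBAu : (Bᴴ * A) *ᵥ u = (σ : ℂ) • v)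
    (W : Matrix (Fin N) (Fin N) ℂ)
    (hW : W = ((2 : ℂ) • (B * Bᴴ) - 1) * ((2 : ℂ) • (A * Aᴴ) - 1)) :
    W *ᵥ (A *ᵥ u) = ((2 * σ : ℝ) : ℂ) • (B *ᵥ v) - A *ᵥ u ∧
    W *ᵥ (B *ᵥ v) = ((4 * σ ^ 2 - 1 : ℝ) : ℂ) • (B *ᵥ v) - ((2 * σ : ℝ) : ℂ) • (A *ᵥ u) ∧
    ∀ x ∈ Submodule.span ℂ ({A *ᵥ u, B *ᵥ v} : Set (Fin N → ℂ)),
      W *ᵥ x ∈ Submodule.span ℂ ({A *ᵥ u, B *ᵥ v} : Set (Fin N → ℂ)) := by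
  have eAA : (A * Aᴴ) *ᵥ (A *ᵥ u) = A *ᵥ u := by
    rw [← mulVec_mulVec, mulVec_mulVec u Aᴴ A, hA, one_mulVec]
  have eBA : (B * Bᴴ) *ᵥ (A *ᵥ u) = (σ : ℂ) • (B *ᵥ v) := by
    rw [← mulVec_mulVec, mulVec_mulVec u Bᴴ A, hBAu, mulVec_smul]
  have eBB : (B * Bᴴ) *ᵥ (B *ᵥ v) = B *ᵥ v := by
    rw [← mulVec_mulVec, mulVec_mulVec v Bᴴ B, hB, one_mulVec]
  have eAB : (A * Aᴴ) *ᵥ (B *ᵥ v) = (σ : ℂ) • (A *ᵥ u) := by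
    rw [← mulVec_mulVec, mulVec_mulVec v Aᴴ B, hABv, mulVec_smul]
  have s1 : ((2 : ℂ) • (A * Aᴴ) - 1) *ᵥ (A *ᵥ u) = A *ᵥ u := by
    rw [sub_mulVec, smul_mulVec, eAA, one_mulVec]; module
  have s2 : ((2 : ℂ) • (A * Aᴴ) - 1) *ᵥ (B *ᵥ v) =
      ((2 : ℂ) * σ) • (A *ᵥ u) - B *ᵥ v := by
    rw [sub_mulVec, smul_mulVec, eAB, one_mulVec]; module
  have h1 : W *ᵥ (A *ᵥ u) = ((2 * σ : ℝ) : ℂ) • (B *ᵥ v) - A *ᵥ u := by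
    rw [hW, ← mulVec_mulVec, s1, sub_mulVec, smul_mulVec, eBA, one_mulVec]
    push_cast
    module
  have h2 : W *ᵥ (B *ᵥ v) = ((4 * σ ^ 2 - 1 : ℝ) : ℂ) • (B *ᵥ v) - ((2 * σ : ℝ) : ℂ) • (A *ᵥ u) := by
    rw [hW, ← mulVec_mulVec, s2, mulVec_sub, mulVec_smul, sub_mulVec, sub_mulVec,
      smul_mulVec, smul_mulVec, eBA, eBB, one_mulVec, one_mulVec]
    push_cast
    module
  refine ⟨h1, h2, ?_⟩
  intro x hx
  induction hx using Submodule.span_induction with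
  | mem y hy =>
    rcases hy with rfl | rfl
    · rw [h1]
      exact sub_mem (Submodule.smul_mem _ _ (Submodule.subset_span (by simp)))
        (Submodule.subset_span (by simp))
    · rw [h2]
      exact sub_mem (Submodule.smul_mem _ _ (Submodule.subset_span (by simp)))
        (Submodule.smul_mem _ _ (Submodule.subset_span (by simp)))
  | zero => simp
  | add y z _ _ hy hz => rw [mulVec_add]; exact add_mem hy hz
  | smul c y _ hy => rw [mulVec_smul]; exact Submodule.smul_mem _ _ hy
end

section
/- With the isometry setup below, let u, v ∈ ℂⁿ be unit vectors and θ ∈ (0, π/2) with AᴴB v = cos(θ) u and BᴴA u = cos(θ) v. Then Au − e^{iθ} Bv is an eigenvector of W with eigenvalue e^{2iθ}, and Au − e^{−iθ} Bv is an eigenvector of W with eigenvalue e^{−2iθ}; that is, W(Au − e^{±iθ}Bv) = e^{±2iθ}(Au − e^{±iθ}Bv), and these vectors are nonzero. -/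
open Matrix

lemma eig_calc {N n : ℕ} (A B : Matrix (Fin N) (Fin n) ℂ) (u v : Fin n → ℂ) (c e : ℂ)
    (f1 : Aᴴ *ᵥ (A *ᵥ u) = u) (f2 : Bᴴ *ᵥ (B *ᵥ v) = v)
    (f3 : Aᴴ *ᵥ (B *ᵥ v) = c • u) (f4 : Bᴴ *ᵥ (A *ᵥ u) = c • v)
    (he : e * e = 2 * c * e - 1) :
    (((2:ℂ) • (B * Bᴴ) - 1) * ((2:ℂ) • (A * Aᴴ) - 1)) *ᵥ (A *ᵥ u - e • (B *ᵥ v)) =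
      (e * e) • (A *ᵥ u - e • (B *ᵥ v)) := by
  have step1 : ((2:ℂ) • (A * Aᴴ) - 1) *ᵥ (A *ᵥ u - e • (B *ᵥ v)) =
      (1 - 2 * c * e) • (A *ᵥ u) + e • (B *ᵥ v) := by
    rw [sub_mulVec, smul_mulVec, one_mulVec, ← mulVec_mulVec,
      mulVec_sub, mulVec_smul, f1, mulVec_sub, mulVec_smul, f3, mulVec_smul]
    module
  rw [← mulVec_mulVec, step1]
  simp only [sub_mulVec, smul_mulVec, one_mulVec, mulVec_add, mulVec_smul,
    ← mulVec_mulVec, f4, f2]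
  match_scalars <;>
    first
      | linear_combination he
      | linear_combination -he
      | linear_combination e * he
      | linear_combination -e * he
      | linear_combination 2 * c * he
      | linear_combination -2 * c * he
      | linear_combination (e + 2 * c) * he
      | linear_combination -(e + 2 * c) * he
      | ring

/-- With isometries A, B, unit vectors u, v and θ ∈ (0, π/2) with
AᴴB v = cos(θ) u, BᴴA u = cos(θ) v, the vectors Au − e^{±iθ} Bv are nonzero
eigenvectors of W with eigenvalues e^{±2iθ}. -/
theorem stmt6 (n N : ℕ) (hn : 0 < n) (hN : 0 < N)
    (A B : Matrix (Fin N) (Fin n) ℂ)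
    (hA : Aᴴ * A = 1) (hB : Bᴴ * B = 1)
    (u v : Fin n → ℂ)
    (hu : star u ⬝ᵥ u = 1) (hv : star v ⬝ᵥ v = 1)
    (θ : ℝ) (hθ : θ ∈ Set.Ioo 0 (Real.pi / 2))
    (hABv : (Aᴴ * B) *ᵥ v = (Real.cos θ : ℂ) • u)
    (hBAu : (Bᴴ * A) *ᵥ u = (Real.cos θ : ℂ) • v)
    (W : Matrix (Fin N) (Fin N) ℂ)
    (hW : W = ((2 : ℂ) • (B * Bᴴ) - 1) * ((2 : ℂ) • (A * Aᴴ) - 1)) :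
    W *ᵥ (A *ᵥ u - Complex.exp (Complex.I * θ) • (B *ᵥ v)) =
      Complex.exp (2 * Complex.I * θ) • (A *ᵥ u - Complex.exp (Complex.I * θ) • (B *ᵥ v)) ∧
    W *ᵥ (A *ᵥ u - Complex.exp (-(Complex.I * θ)) • (B *ᵥ v)) =
      Complex.exp (-(2 * Complex.I * θ)) • (A *ᵥ u - Complex.exp (-(Complex.I * θ)) • (B *ᵥ v)) ∧
    A *ᵥ u - Complex.exp (Complex.I * θ) • (B *ᵥ v) ≠ 0 ∧
    A *ᵥ u - Complex.exp (-(Complex.I * θ)) • (B *ᵥ v) ≠ 0 := by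
  obtain ⟨hθ0, hθ1⟩ := hθ
  set c : ℂ := (Real.cos θ : ℂ) with hc
  have f1 : Aᴴ *ᵥ (A *ᵥ u) = u := by rw [mulVec_mulVec, hA, one_mulVec]
  have f2 : Bᴴ *ᵥ (B *ᵥ v) = v := by rw [mulVec_mulVec, hB, one_mulVec]
  have f3 : Aᴴ *ᵥ (B *ᵥ v) = c • u := by rw [mulVec_mulVec, hABv]
  have f4 : Bᴴ *ᵥ (A *ᵥ u) = c • v := by rw [mulVec_mulVec, hBAu]
  have hsc : ((Real.sin θ : ℂ))^2 + c^2 = 1 := by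
    rw [hc]; push_cast [← Complex.ofReal_pow]
    exact_mod_cast Real.sin_sq_add_cos_sq θ
  have he1 : Complex.exp (Complex.I * θ) = c + Complex.I * Real.sin θ := by
    rw [show Complex.I * (θ:ℂ) = (θ:ℂ) * Complex.I by ring, Complex.exp_mul_I,
      ← Complex.ofReal_cos, ← Complex.ofReal_sin, hc]; ring
  have he2 : Complex.exp (-(Complex.I * θ)) = c - Complex.I * Real.sin θ := by
    rw [show -(Complex.I * (θ:ℂ)) = ((-θ : ℝ):ℂ) * Complex.I by push_cast; ring,
      Complex.exp_mul_I, ← Complex.ofReal_cos, ← Complex.ofReal_sin, Real.cos_neg,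
      Real.sin_neg, hc]; push_cast; ring
  have key1 : Complex.exp (Complex.I * θ) * Complex.exp (Complex.I * θ)
      = 2 * c * Complex.exp (Complex.I * θ) - 1 := by
    rw [he1]; linear_combination ((Real.sin θ : ℂ))^2 * Complex.I_sq - hsc
  have key2 : Complex.exp (-(Complex.I * θ)) * Complex.exp (-(Complex.I * θ))
      = 2 * c * Complex.exp (-(Complex.I * θ)) - 1 := by
    rw [he2]; linear_combination ((Real.sin θ : ℂ))^2 * Complex.I_sq - hsc
  have hexp1 : Complex.exp (2 * Complex.I * θ) =
      Complex.exp (Complex.I * θ) * Complex.exp (Complex.I * θ) := by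
    rw [← Complex.exp_add]; ring_nf
  have hexp2 : Complex.exp (-(2 * Complex.I * θ)) =
      Complex.exp (-(Complex.I * θ)) * Complex.exp (-(Complex.I * θ)) := by
    rw [← Complex.exp_add]; ring_nf
  have hu0 : u ≠ 0 := by
    intro h; rw [h] at hu; simp at hu
  have hcos0 : 0 < Real.cos θ := Real.cos_pos_of_mem_Ioo
    ⟨by linarith [Real.pi_pos], hθ1⟩
  have hsin0 : 0 < Real.sin θ := Real.sin_pos_of_pos_of_lt_pi hθ0
    (by linarith [Real.pi_pos])
  have nonzero : ∀ e : ℂ, (1 - e * c ≠ 0) → A *ᵥ u - e • (B *ᵥ v) ≠ 0 := by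
    intro e hne h
    have : Aᴴ *ᵥ (A *ᵥ u - e • (B *ᵥ v)) = 0 := by rw [h, mulVec_zero]
    rw [mulVec_sub, mulVec_smul, f1, f3] at this
    have : (1 - e * c) • u = 0 := by
      rw [sub_smul, one_smul, ← smul_smul]; exact this
    exact hne ((smul_eq_zero.mp this).resolve_right hu0)
  refine ⟨?_, ?_, ?_, ?_⟩
  · rw [hW, hexp1]; exact eig_calc A B u v c _ f1 f2 f3 f4 key1
  · rw [hW, hexp2]; exact eig_calc A B u v c _ f1 f2 f3 f4 key2
  · refine nonzero _ (fun h => ?_)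
    have him := congrArg Complex.im h
    simp [he1, hc, Complex.mul_im, Complex.add_im] at him
    rcases him with h' | h'
    · exact hsin0.ne' h'
    · exact hcos0.ne' h'
  · refine nonzero _ (fun h => ?_)
    have him := congrArg Complex.im h
    simp [he2, hc, Complex.mul_im, Complex.sub_im] at him
    rcases him with h' | h'
    · exact hsin0.ne' h'
    · exact hcos0.ne' h'
end

section
/- With the isometry setup below, let u, v ∈ ℂⁿ be unit vectors such that AᴴB v = u and BᴴA u = v (i.e., (u, v) is a singular vector pair of the discriminant matrix D = AᴴB with singular value 1). Then Au = Bv, and W fixes this vector: W(Au) = Au. -/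
open Matrix

lemma vec_eq_zero_of_dot {N : ℕ} (w : Fin N → ℂ) (h : star w ⬝ᵥ w = 0) : w = 0 := by
  have h1 : ∑ j, (Complex.normSq (w j) : ℂ) = 0 := by
    rw [← h]
    simp [dotProduct, Complex.normSq_eq_conj_mul_self, Complex.star_def]
  have h2 : ∑ j, Complex.normSq (w j) = 0 := by exact_mod_cast h1
  have h3 := (Finset.sum_eq_zero_iff_of_nonneg
    (fun j _ => Complex.normSq_nonneg (w j))).mp h2
  funext i
  exact Complex.normSq_eq_zero.mp (h3 i (Finset.mem_univ i))

/-- With isometries A, B and unit vectors u, v forming a singular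
vector pair of D = AᴴB with singular value 1 (AᴴB v = u, BᴴA u = v), one has
Au = Bv and W fixes this vector: W(Au) = Au. -/
theorem stmt7 (n N : ℕ) (hn : 0 < n) (hN : 0 < N)
    (A B : Matrix (Fin N) (Fin n) ℂ)
    (hA : Aᴴ * A = 1) (hB : Bᴴ * B = 1)
    (u v : Fin n → ℂ)
    (hu : star u ⬝ᵥ u = 1) (hv : star v ⬝ᵥ v = 1)
    (hABv : (Aᴴ * B) *ᵥ v = u)
    (hBAu : (Bᴴ * A) *ᵥ u = v)
    (W : Matrix (Fin N) (Fin N) ℂ)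
    (hW : W = ((2 : ℂ) • (B * Bᴴ) - 1) * ((2 : ℂ) • (A * Aᴴ) - 1)) :
    A *ᵥ u = B *ᵥ v ∧ W *ᵥ (A *ᵥ u) = A *ᵥ u := by
  have key : ∀ (M : Matrix (Fin N) (Fin n) ℂ) (x : Fin n → ℂ) (w : Fin N → ℂ),
      star (M *ᵥ x) ⬝ᵥ w = star x ⬝ᵥ (Mᴴ *ᵥ w) := by
    intro M x w
    rw [star_mulVec, ← dotProduct_mulVec]
  have hAu : star (A *ᵥ u) ⬝ᵥ (A *ᵥ u) = 1 := by
    rw [key, mulVec_mulVec, hA, one_mulVec, hu]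
  have hBv : star (B *ᵥ v) ⬝ᵥ (B *ᵥ v) = 1 := by
    rw [key, mulVec_mulVec, hB, one_mulVec, hv]
  have hAB : star (A *ᵥ u) ⬝ᵥ (B *ᵥ v) = 1 := by
    rw [key, mulVec_mulVec, hABv, hu]
  have hBA : star (B *ᵥ v) ⬝ᵥ (A *ᵥ u) = 1 := by
    rw [key, mulVec_mulVec, hBAu, hv]
  have hzero : (A *ᵥ u) - (B *ᵥ v) = 0 := by
    apply vec_eq_zero_of_dot
    rw [star_sub, sub_dotProduct, dotProduct_sub, dotProduct_sub, hAu, hBv, hAB, hBA]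
    ring
  have heq : A *ᵥ u = B *ᵥ v := sub_eq_zero.mp hzero
  refine ⟨heq, ?_⟩
  have hRA : ((2 : ℂ) • (A * Aᴴ) - 1) *ᵥ (A *ᵥ u) = A *ᵥ u := by
    rw [sub_mulVec, smul_mulVec, mulVec_mulVec, Matrix.mul_assoc, hA,
      Matrix.mul_one, one_mulVec]
    module
  have hRB : ((2 : ℂ) • (B * Bᴴ) - 1) *ᵥ (B *ᵥ v) = B *ᵥ v := by
    rw [sub_mulVec, smul_mulVec, mulVec_mulVec, Matrix.mul_assoc, hB,
      Matrix.mul_one, one_mulVec]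
    module
  rw [hW, ← mulVec_mulVec, hRA, heq, hRB]
end

section
/- With the isometry setup below: (i) if u ∈ ℂⁿ satisfies BᴴA u = 0 (u is a left singular vector of D = AᴴB with singular value 0), then W(Au) = −Au; (ii) if v ∈ ℂⁿ satisfies AᴴB v = 0 (v is a right singular vector of D with singular value 0), then W(Bv) = −Bv. That is, W acts as minus the identity on range(A) ∩ range(B)^⊥ and on range(A)^⊥ ∩ range(B). -/
open Matrix

/-- With isometries A, B: (i) if BᴴA u = 0 then W(Au) = −Au;
(ii) if AᴴB v = 0 then W(Bv) = −Bv. That is, W acts as minus the identity on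
range(A) ∩ range(B)^⊥ and on range(A)^⊥ ∩ range(B). -/
theorem stmt8 (n N : ℕ) (hn : 0 < n) (hN : 0 < N)
    (A B : Matrix (Fin N) (Fin n) ℂ)
    (hA : Aᴴ * A = 1) (hB : Bᴴ * B = 1)
    (W : Matrix (Fin N) (Fin N) ℂ)
    (hW : W = ((2 : ℂ) • (B * Bᴴ) - 1) * ((2 : ℂ) • (A * Aᴴ) - 1)) :
    (∀ u : Fin n → ℂ, (Bᴴ * A) *ᵥ u = 0 → W *ᵥ (A *ᵥ u) = -(A *ᵥ u)) ∧
    (∀ v : Fin n → ℂ, (Aᴴ * B) *ᵥ v = 0 → W *ᵥ (B *ᵥ v) = -(B *ᵥ v)) := by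
  subst hW
  constructor
  · intro u hu
    have h1 : Aᴴ *ᵥ (A *ᵥ u) = u := by rw [mulVec_mulVec, hA, one_mulVec]
    have h2 : Bᴴ *ᵥ (A *ᵥ u) = 0 := by rw [mulVec_mulVec]; exact hu
    have s1 : ((2 : ℂ) • (A * Aᴴ) - 1) *ᵥ (A *ᵥ u) = A *ᵥ u := by
      rw [sub_mulVec, smul_mulVec, ← mulVec_mulVec, h1, one_mulVec,
        two_smul, add_sub_cancel_right]
    rw [← mulVec_mulVec, s1, sub_mulVec, smul_mulVec, ← mulVec_mulVec,
      h2, mulVec_zero, smul_zero, one_mulVec, zero_sub]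
  · intro v hv
    have h1 : Bᴴ *ᵥ (B *ᵥ v) = v := by rw [mulVec_mulVec, hB, one_mulVec]
    have h2 : Aᴴ *ᵥ (B *ᵥ v) = 0 := by rw [mulVec_mulVec]; exact hv
    have s1 : ((2 : ℂ) • (A * Aᴴ) - 1) *ᵥ (B *ᵥ v) = -(B *ᵥ v) := by
      rw [sub_mulVec, smul_mulVec, ← mulVec_mulVec, h2, mulVec_zero,
        smul_zero, one_mulVec, zero_sub]
    rw [← mulVec_mulVec, s1, mulVec_neg, sub_mulVec, smul_mulVec,
      ← mulVec_mulVec, h1, one_mulVec, two_smul, add_sub_cancel_right]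
end

section
/- In the generalized reversed-walk setup below, the state ξ₀ = A√σ (where √σ is the entrywise square root of σ) is fixed by the quantum walk operator: Ŵ ξ₀ = ξ₀, where Ŵ = (2B̂B̂ᴴ − I)(2AAᴴ − I). In particular, ξ₀ is a unit eigenvector of Ŵ with eigenvalue 1. -/
open Matrix

/-- In the generalized reversed-walk setup, the state ξ₀ = A√σ is
fixed by the walk operator Ŵ = (2B̂B̂ᴴ − I)(2AAᴴ − I): Ŵ ξ₀ = ξ₀; moreover ξ₀
is a unit vector, hence a unit eigenvector of Ŵ with eigenvalue 1. -/
theorem stmt11 (n : ℕ) (hn : 0 < n)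
    (P : Matrix (Fin n) (Fin n) ℝ)
    (hP0 : ∀ i j, 0 ≤ P i j) (hP1 : ∀ i, ∑ j, P i j = 1)
    (σ : Fin n → ℝ) (hσ0 : ∀ i, 0 < σ i) (hσ1 : ∑ i, σ i = 1)
    (hPcol : ∀ j, ∃ i, P i j ≠ 0)
    (r : Fin n → ℝ) (hr : ∀ y, r y = ∑ x, σ x * P x y / σ y)
    (Pstar : Matrix (Fin n) (Fin n) ℝ)
    (hPstar : ∀ y x, Pstar y x = (σ x * P x y / σ y) / r y)
    (A : Matrix (Fin n × Fin n) (Fin n) ℂ)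
    (hA : ∀ p x', A p x' = if p.1 = x' then (Real.sqrt (P p.1 p.2) : ℂ) else 0)
    (Bhat : Matrix (Fin n × Fin n) (Fin n) ℂ)
    (hBhat : ∀ p y', Bhat p y' = if p.2 = y' then (Real.sqrt (Pstar p.2 p.1) : ℂ) else 0)
    (What : Matrix (Fin n × Fin n) (Fin n × Fin n) ℂ)
    (hWhat : What = ((2 : ℂ) • (Bhat * Bhatᴴ) - 1) * ((2 : ℂ) • (A * Aᴴ) - 1))
    (ξ₀ : Fin n × Fin n → ℂ)
    (hξ₀ : ξ₀ = A *ᵥ fun x => (Real.sqrt (σ x) : ℂ)) :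
    What *ᵥ ξ₀ = ξ₀ ∧ star ξ₀ ⬝ᵥ ξ₀ = 1 := by
  -- positivity of r and σ * r
  have hr0 : ∀ y, 0 < r y := by
    intro y
    obtain ⟨i, hi⟩ := hPcol y
    have hi' : 0 < P i y := (hP0 i y).lt_of_ne (Ne.symm hi)
    rw [hr]
    refine Finset.sum_pos' (fun x _ => by have := hσ0 x; have := hσ0 y; have := hP0 x y; positivity)
      ⟨i, Finset.mem_univ i, ?_⟩
    have := hσ0 i; have := hσ0 y
    positivity
  have hs0 : ∀ y, 0 < σ y * r y := fun y => mul_pos (hσ0 y) (hr0 y)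
  have hsq0 : ∀ y, Real.sqrt (σ y * r y) ≠ 0 := fun y => ne_of_gt (Real.sqrt_pos.2 (hs0 y))
  -- key sum identity
  have hsum : ∀ y, ∑ x, σ x * P x y = σ y * r y := by
    intro y
    rw [hr, ← Finset.sum_div, mul_div_cancel₀ _ (hσ0 y).ne']
  -- sqrt identity for Pstar
  have hPs : ∀ y x, Real.sqrt (Pstar y x) * Real.sqrt (σ y * r y)
      = Real.sqrt (σ x * P x y) := by
    intro y x
    have h1 : Pstar y x = σ x * P x y / (σ y * r y) := by
      rw [hPstar, div_div]
    rw [h1, Real.sqrt_div (by have := hσ0 x; have := hP0 x y; positivity),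
      div_mul_cancel₀ _ (hsq0 y)]
  -- explicit form of ξ₀
  have hxi : ∀ p : Fin n × Fin n, ξ₀ p = (Real.sqrt (σ p.1 * P p.1 p.2) : ℂ) := by
    intro p
    rw [hξ₀]
    simp only [mulVec, dotProduct, hA, ite_mul, zero_mul, Finset.sum_ite_eq,
      Finset.mem_univ, if_true]
    rw [← Complex.ofReal_mul, ← Real.sqrt_mul (hP0 p.1 p.2), mul_comm (P p.1 p.2) (σ p.1)]
  -- Aᴴ * A = 1
  have hAtA : Aᴴ * A = 1 := by
    ext i j
    simp only [mul_apply, conjTranspose_apply, hA, Fintype.sum_prod_type, apply_ite star,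
      star_zero, RCLike.star_def, Complex.conj_ofReal, ite_mul, zero_mul, mul_ite, mul_zero,
      ← ite_and]
    by_cases h : i = j
    · subst h
      simp only [and_self, one_apply_eq]
      rw [Finset.sum_comm]
      simp only [Finset.sum_ite_eq', Finset.mem_univ, if_true]
      have h2 : ∀ y : Fin n, (Real.sqrt (P i y) : ℂ) * (Real.sqrt (P i y) : ℂ)
          = ((P i y : ℝ) : ℂ) := fun y => by
        rw [← Complex.ofReal_mul, Real.mul_self_sqrt (hP0 i y)]
      simp_rw [h2]
      rw [← Complex.ofReal_sum, hP1, Complex.ofReal_one]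
    · have hno : ∀ x : Fin n, ¬(x = j ∧ x = i) := by
        rintro x ⟨rfl, rfl⟩; exact h rfl
      simp [hno, Matrix.one_apply, h]
  -- first reflection fixes ξ₀
  have hAA : (A * Aᴴ) *ᵥ ξ₀ = ξ₀ := by
    rw [hξ₀, mulVec_mulVec, Matrix.mul_assoc, hAtA, Matrix.mul_one]
  -- Bhatᴴ *ᵥ ξ₀
  have hBv : Bhatᴴ *ᵥ ξ₀ = fun y => (Real.sqrt (σ y * r y) : ℂ) := by
    funext y
    simp only [mulVec, dotProduct, conjTranspose_apply, hBhat, apply_ite star, star_zero,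
      RCLike.star_def, Complex.conj_ofReal, ite_mul, zero_mul, Fintype.sum_prod_type]
    simp_rw [hxi]
    simp only [Finset.sum_ite_eq', Finset.mem_univ, if_true]
    have h2 : ∀ x : Fin n, (Real.sqrt (Pstar y x) : ℂ) * (Real.sqrt (σ x * P x y) : ℂ)
        = ((σ x * P x y / Real.sqrt (σ y * r y) : ℝ) : ℂ) := fun x => by
      rw [← Complex.ofReal_mul]
      congr 1
      rw [eq_div_iff (hsq0 y), mul_right_comm, hPs,
        Real.mul_self_sqrt (by have := hσ0 x; have := hP0 x y; positivity)]
    simp_rw [h2]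
    rw [← Complex.ofReal_sum, ← Finset.sum_div, hsum, Real.div_sqrt]
  -- Bhat *ᵥ (sqrt (σ r)) = ξ₀
  have hBw : Bhat *ᵥ (fun y => (Real.sqrt (σ y * r y) : ℂ)) = ξ₀ := by
    funext p
    simp only [mulVec, dotProduct, hBhat, ite_mul, zero_mul, Finset.sum_ite_eq,
      Finset.mem_univ, if_true]
    rw [hxi p, ← Complex.ofReal_mul, hPs]
  have hBB : (Bhat * Bhatᴴ) *ᵥ ξ₀ = ξ₀ := by
    rw [← mulVec_mulVec, hBv, hBw]
  -- reflections
  have refl1 : ((2 : ℂ) • (A * Aᴴ) - 1) *ᵥ ξ₀ = ξ₀ := by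
    rw [sub_mulVec, smul_mulVec, hAA, one_mulVec, two_smul, add_sub_cancel_right]
  have refl2 : ((2 : ℂ) • (Bhat * Bhatᴴ) - 1) *ᵥ ξ₀ = ξ₀ := by
    rw [sub_mulVec, smul_mulVec, hBB, one_mulVec, two_smul, add_sub_cancel_right]
  constructor
  · rw [hWhat, ← mulVec_mulVec, refl1, refl2]
  · simp only [dotProduct, Pi.star_apply]
    simp_rw [hxi, RCLike.star_def, Complex.conj_ofReal, ← Complex.ofReal_mul]
    have h2 : ∀ p : Fin n × Fin n,
        Real.sqrt (σ p.1 * P p.1 p.2) * Real.sqrt (σ p.1 * P p.1 p.2) = σ p.1 * P p.1 p.2 :=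
      fun p => Real.mul_self_sqrt (by have := hσ0 p.1; have := hP0 p.1 p.2; positivity)
    simp_rw [h2]
    rw [← Complex.ofReal_sum, Fintype.sum_prod_type]
    simp_rw [← Finset.mul_sum, hP1, mul_one, hσ1, Complex.ofReal_one]
end

section
/- In the generalized reversed-walk setup below, let M ⊊ {1,…,n} be a set of marked vertices, let P_{−M}, 𝒟_{−M}, D̂_r denote the principal submatrices of P, 𝒟, D_r on the unmarked indices, and let σ_{−M} be the restriction of σ. Then 𝒟_{−M} D̂_r^{1/2} = diag(σ_{−M})^{1/2} P_{−M} diag(σ_{−M})^{−1/2} (so P_{−M} and 𝒟_{−M} D̂_r^{1/2} are similar), and if I − P_{−M} is invertible then the classical hitting time H_{σ,M} = σ_{−M}ᵀ (I − P_{−M})^{−1} 𝟙 satisfies H_{σ,M} = √σ_{−M}ᵀ (I − 𝒟_{−M} D̂_r^{1/2})^{−1} √σ_{−M}, where √σ_{−M} is the entrywise square root and 𝟙 is the all-ones vector. -/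
open Matrix

/-- In the generalized reversed-walk setup, with marked set M ⊊ {1,…,n},
the principal submatrices satisfy 𝒟_{−M} D̂_r^{1/2} = diag(σ_{−M})^{1/2} P_{−M} diag(σ_{−M})^{−1/2}
(so P_{−M} and 𝒟_{−M} D̂_r^{1/2} are similar), and if I − P_{−M} is invertible the
classical hitting time satisfies
σ_{−M}ᵀ(I − P_{−M})⁻¹𝟙 = √σ_{−M}ᵀ (I − 𝒟_{−M} D̂_r^{1/2})⁻¹ √σ_{−M}. -/
theorem stmt14 (n : ℕ) (hn : 0 < n)
    (P : Matrix (Fin n) (Fin n) ℝ)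
    (hP0 : ∀ i j, 0 ≤ P i j) (hP1 : ∀ i, ∑ j, P i j = 1)
    (σ : Fin n → ℝ) (hσ0 : ∀ i, 0 < σ i) (hσ1 : ∑ i, σ i = 1)
    (hPcol : ∀ j, ∃ i, P i j ≠ 0)
    (r : Fin n → ℝ) (hr : ∀ y, r y = ∑ x, σ x * P x y / σ y)
    (Pstar : Matrix (Fin n) (Fin n) ℝ)
    (hPstar : ∀ y x, Pstar y x = (σ x * P x y / σ y) / r y)
    (𝒟 : Matrix (Fin n) (Fin n) ℝ)
    (h𝒟 : ∀ x y, 𝒟 x y = Real.sqrt (P x y * Pstar y x))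
    (M : Finset (Fin n)) (hM : M ≠ Finset.univ)
    (Pm : Matrix {i : Fin n // i ∉ M} {i : Fin n // i ∉ M} ℝ)
    (hPm : Pm = P.submatrix Subtype.val Subtype.val)
    (Dm : Matrix {i : Fin n // i ∉ M} {i : Fin n // i ∉ M} ℝ)
    (hDm : Dm = 𝒟.submatrix Subtype.val Subtype.val)
    (Drhalf : Matrix {i : Fin n // i ∉ M} {i : Fin n // i ∉ M} ℝ)
    (hDrhalf : Drhalf = Matrix.diagonal (fun i => Real.sqrt (r i.1))) :
    Dm * Drhalf =
      Matrix.diagonal (fun i => Real.sqrt (σ i.1)) * Pm *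
        Matrix.diagonal (fun i => (Real.sqrt (σ i.1))⁻¹) ∧
    (IsUnit (1 - Pm) →
      (fun i => σ i.1) ⬝ᵥ ((1 - Pm)⁻¹ *ᵥ fun _ => (1 : ℝ)) =
        (fun i => Real.sqrt (σ i.1)) ⬝ᵥ ((1 - Dm * Drhalf)⁻¹ *ᵥ fun i => Real.sqrt (σ i.1))) := by

  -- r is positive
  have hrpos : ∀ y, 0 < r y := by
    intro y
    rw [hr y]
    obtain ⟨i, hi⟩ := hPcol y
    have hterm : ∀ x, 0 ≤ σ x * P x y / σ y := fun x =>
      div_nonneg (mul_nonneg (hσ0 x).le (hP0 x y)) (hσ0 y).le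
    have hipos : 0 < σ i * P i y / σ y :=
      div_pos (mul_pos (hσ0 i) (lt_of_le_of_ne (hP0 i y) (Ne.symm hi))) (hσ0 y)
    exact Finset.sum_pos' (fun x _ => hterm x) ⟨i, Finset.mem_univ i, hipos⟩
  -- scalar identity
  have hkey : ∀ x y : Fin n, 𝒟 x y * Real.sqrt (r y)
      = Real.sqrt (σ x) * P x y * (Real.sqrt (σ y))⁻¹ := by
    intro x y
    rw [h𝒟, hPstar]
    rw [← Real.sqrt_mul (mul_nonneg (hP0 x y)
      (div_nonneg (div_nonneg (mul_nonneg (hσ0 x).le (hP0 x y)) (hσ0 y).le) (hrpos y).le))]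
    have : P x y * (σ x * P x y / σ y / r y) * r y = P x y ^ 2 * (σ x / σ y) := by
      rw [mul_assoc, div_mul_cancel₀ _ (hrpos y).ne']
      ring
    rw [this]
    rw [Real.sqrt_mul (sq_nonneg _), Real.sqrt_sq (hP0 x y), Real.sqrt_div (hσ0 x).le]
    rw [div_eq_mul_inv]
    ring
  set S : Matrix {i : Fin n // i ∉ M} {i : Fin n // i ∉ M} ℝ :=
    Matrix.diagonal (fun i => Real.sqrt (σ i.1)) with hS
  set Sinv : Matrix {i : Fin n // i ∉ M} {i : Fin n // i ∉ M} ℝ :=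
    Matrix.diagonal (fun i => (Real.sqrt (σ i.1))⁻¹) with hSinv
  have hσs : ∀ i : Fin n, Real.sqrt (σ i) ≠ 0 := fun i =>
    (Real.sqrt_pos.2 (hσ0 i)).ne'
  have hpart1 : Dm * Drhalf = S * Pm * Sinv := by
    ext i j
    simp only [hDm, hDrhalf, hS, hSinv, hPm, Matrix.mul_apply, Matrix.submatrix_apply,
      Matrix.diagonal_apply, Finset.sum_ite_eq', Finset.sum_ite_eq, Finset.mem_univ, if_true]
    simpa using hkey i.1 j.1
  refine ⟨hpart1, ?_⟩
  intro hU
  have hSS : S * Sinv = 1 := by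
    rw [hS, hSinv, Matrix.diagonal_mul_diagonal]
    convert Matrix.diagonal_one
    exact mul_inv_cancel₀ (hσs _)
  have hSSi : Sinv * S = 1 := by
    rw [hS, hSinv, Matrix.diagonal_mul_diagonal]
    convert Matrix.diagonal_one
    exact inv_mul_cancel₀ (hσs _)
  have hsim : (1 : Matrix _ _ ℝ) - Dm * Drhalf = S * (1 - Pm) * Sinv := by
    rw [Matrix.mul_sub, Matrix.sub_mul, Matrix.mul_one, hSS, hpart1]
  have hSinv_inv : S⁻¹ = Sinv := Matrix.inv_eq_right_inv hSS
  have hS_inv : Sinv⁻¹ = S := Matrix.inv_eq_right_inv hSSi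
  have hinv : ((1 : Matrix _ _ ℝ) - Dm * Drhalf)⁻¹ = S * (1 - Pm)⁻¹ * Sinv := by
    rw [hsim, Matrix.mul_inv_rev, Matrix.mul_inv_rev, hSinv_inv, hS_inv, Matrix.mul_assoc]
  rw [hinv]
  have hvec : Sinv *ᵥ (fun i => Real.sqrt (σ i.1)) = fun _ => (1 : ℝ) := by
    ext i
    simp [hSinv, Matrix.mulVec_diagonal, inv_mul_cancel₀ (hσs i.1)]
  rw [← Matrix.mulVec_mulVec, ← Matrix.mulVec_mulVec, hvec]
  have : ∀ v : {i : Fin n // i ∉ M} → ℝ,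
      (fun i => Real.sqrt (σ i.1)) ⬝ᵥ (S *ᵥ v) = (fun i => σ i.1) ⬝ᵥ v := by
    intro v
    simp only [dotProduct, Matrix.mulVec_diagonal, hS]
    exact Finset.sum_congr rfl fun i _ => by
      rw [← mul_assoc, Real.mul_self_sqrt (hσ0 i.1).le]
  exact (this _).symm
end

section
/- In the generalized reversed-walk setup below, let M ⊊ {1,…,n} be a nonempty set of marked vertices and assume the spectral radius of P_{−M} is strictly less than 1. Then I − 𝒟_{−M} D̂_r^{1/2} is an invertible M-matrix: its inverse (I − 𝒟_{−M} D̂_r^{1/2})^{−1} has all entries nonnegative. Consequently the classical hitting time H_{σ,M} = √σ_{−M}ᵀ (I − 𝒟_{−M} D̂_r^{1/2})^{−1} √σ_{−M} is nonnegative. -/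
/-!
Conjugating by `diag √σ` turns `𝒟_{−M} D̂_r^{1/2}` into `P_{−M}`: indeed
`𝒟_{xy} √r_y = √(P_{xy} σ_x P_{xy} / σ_y) = √σ_x P_{xy} / √σ_y`. So it suffices to treat
`I − P_{−M}`, which is invertible because `1` is not an eigenvalue of `P_{−M}`. As `P_{−M}` is
nonnegative and substochastic, `t P_{−M}` has ∞-operator norm `< 1` for `t < 1`, so
`(I − t P_{−M})⁻¹ = Σ tᵏ P_{−M}ᵏ ≥ 0`, and continuity of inversion at `t = 1` gives
`(I − P_{−M})⁻¹ ≥ 0`. A positive diagonal similarity preserves entrywise nonnegativity.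
-/

open Matrix

namespace Matrix

theorem isClosed_setOf_forall_apply_nonneg {m n : Type*} :
    IsClosed {B : Matrix m n ℝ | ∀ i j, 0 ≤ B i j} := by
  simp only [Set.ofPred_forall]
  exact isClosed_iInter fun i => isClosed_iInter fun j =>
    isClosed_le continuous_const ((continuous_apply j).comp (continuous_apply i))

section LinftyOpNorm

variable {m : Type*} [Fintype m] [DecidableEq m]

attribute [local instance] Matrix.linftyOpNormedAddCommGroup Matrix.linftyOpNormedSpace
  Matrix.linftyOpNormedRing Matrix.linftyOpNormedAlgebra

theorem linfty_opNorm_le_one_of_sum_le_one {A : Matrix m m ℝ} (hA0 : ∀ i j, 0 ≤ A i j)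
    (hA1 : ∀ i, ∑ j, A i j ≤ 1) : ‖A‖ ≤ 1 := by
  rw [← coe_nnnorm, ← NNReal.coe_one, NNReal.coe_le_coe, linfty_opNNNorm_def]
  refine Finset.sup_le fun i _ => ?_
  rw [← NNReal.coe_le_coe, NNReal.coe_sum, NNReal.coe_one]
  calc ∑ j, (‖A i j‖₊ : ℝ) = ∑ j, A i j := by simp [abs_of_nonneg (hA0 i _)]
    _ ≤ 1 := hA1 i

theorem inv_one_sub_apply_nonneg_of_norm_lt_one {A : Matrix m m ℝ} (hA0 : ∀ i j, 0 ≤ A i j)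
    (hA : ‖A‖ < 1) : ∀ i j, 0 ≤ (1 - A)⁻¹ i j := by
  have : CompleteSpace (Matrix m m ℝ) := FiniteDimensional.complete ℝ _
  rw [nonsing_inv_eq_ringInverse]
  exact isClosed_setOf_forall_apply_nonneg.mem_of_tendsto
    (hasSum_geom_series_inverse A hA).tendsto_sum_nat <| .of_forall fun N i j => by
      rw [sum_apply]
      exact Finset.sum_nonneg fun k _ => pow_apply_nonneg hA0 k i j

theorem inv_one_sub_apply_nonneg_of_sum_le_one {A : Matrix m m ℝ} (hA0 : ∀ i j, 0 ≤ A i j)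
    (hA1 : ∀ i, ∑ j, A i j ≤ 1) (hU : IsUnit (1 - A)) : ∀ i j, 0 ≤ (1 - A)⁻¹ i j := by
  have : CompleteSpace (Matrix m m ℝ) := FiniteDimensional.complete ℝ _
  have hA := linfty_opNorm_le_one_of_sum_le_one hA0 hA1
  -- `(1 - t • A)⁻¹` is a convergent Neumann series for `0 ≤ t < 1`; let `t → 1⁻`.
  have hcont : ContinuousWithinAt (fun t : ℝ => (1 - t • A)⁻¹) (Set.Ico 0 1) 1 := by
    simp_rw [nonsing_inv_eq_ringInverse]
    refine ContinuousAt.continuousWithinAt ?_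
    have hinv : ContinuousAt Ring.inverse (1 - A) := by
      have := NormedRing.inverse_continuousAt hU.unit
      rwa [hU.unit_spec] at this
    exact hinv.comp_of_eq (by fun_prop) (by simp)
  have hmaps : Set.MapsTo (fun t : ℝ => (1 - t • A)⁻¹) (Set.Ico 0 1)
      {B : Matrix m m ℝ | ∀ i j, 0 ≤ B i j} := by
    rintro t ⟨ht0, ht1⟩
    refine inv_one_sub_apply_nonneg_of_norm_lt_one (fun i j => mul_nonneg ht0 (hA0 i j)) ?_
    calc ‖t • A‖ = t * ‖A‖ := by rw [norm_smul, Real.norm_of_nonneg ht0]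
      _ < 1 := by nlinarith [norm_nonneg A]
  have h1 : (1 : ℝ) ∈ closure (Set.Ico 0 1) := by simp
  simpa [isClosed_setOf_forall_apply_nonneg.closure_eq] using hcont.mem_closure h1 hmaps

end LinftyOpNorm

variable {m : Type*} [Fintype m] [DecidableEq m]

theorem isUnit_one_sub_of_one_notMem_spectrum_map {A : Matrix m m ℝ}
    (h : (1 : ℂ) ∉ spectrum ℂ (A.map Complex.ofReal)) : IsUnit (1 - A) := by
  have hmap : (1 - A).map Complex.ofReal = 1 - A.map Complex.ofReal := by
    simp [Matrix.map_sub]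
  rw [spectrum.notMem_iff, map_one, ← hmap, isUnit_iff_isUnit_det] at h
  change IsUnit (Complex.ofRealHom.mapMatrix (1 - A)).det at h
  rw [← RingHom.map_det, isUnit_iff_ne_zero, map_ne_zero] at h
  exact (isUnit_iff_isUnit_det _).2 (isUnit_iff_ne_zero.2 h)

omit [DecidableEq m] in
theorem sum_submatrix_le_one {n : Type*} [Fintype n] {A : Matrix n n ℝ}
    (hA0 : ∀ i j, 0 ≤ A i j) (hA1 : ∀ i, ∑ j, A i j ≤ 1) {f : m → n}
    (hf : Function.Injective f) (i : m) :
    ∑ j, A.submatrix f f i j ≤ 1 :=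
  calc ∑ j, A.submatrix f f i j = ∑ k ∈ Finset.univ.map ⟨f, hf⟩, A (f i) k := by simp
    _ ≤ ∑ k, A (f i) k := Finset.sum_le_univ_sum_of_nonneg (hA0 (f i))
    _ ≤ 1 := hA1 (f i)

theorem inv_mul_mul_eq_of_mul_eq_one {α : Type*} [CommRing α] {U V : Matrix m m α}
    (h : U * V = 1) (B : Matrix m m α) : (U * B * V)⁻¹ = U * B⁻¹ * V := by
  rw [mul_inv_rev, mul_inv_rev, inv_eq_left_inv h, inv_eq_right_inv h, mul_assoc]

variable {K : Type*} [Field K]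

theorem diagonal_mul_diagonal_inv {d : m → K} (hd : ∀ i, d i ≠ 0) :
    diagonal d * diagonal d⁻¹ = 1 := by
  simp [diagonal_mul_diagonal, hd]

theorem one_sub_diagonal_mul_mul_diagonal_inv {d : m → K} (hd : ∀ i, d i ≠ 0)
    (A : Matrix m m K) :
    1 - diagonal d * A * diagonal d⁻¹ = diagonal d * (1 - A) * diagonal d⁻¹ := by
  rw [mul_sub, sub_mul, mul_one, diagonal_mul_diagonal_inv hd]

theorem isUnit_one_sub_diagonal_mul_mul_diagonal_inv {d : m → K} (hd : ∀ i, d i ≠ 0)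
    {A : Matrix m m K} (hA : IsUnit (1 - A)) : IsUnit (1 - diagonal d * A * diagonal d⁻¹) := by
  have hdd := diagonal_mul_diagonal_inv hd
  rw [one_sub_diagonal_mul_mul_diagonal_inv hd]
  exact (((isUnit_iff_isUnit_det _).2 (isUnit_det_of_right_inverse hdd)).mul hA).mul
    ((isUnit_iff_isUnit_det _).2 (isUnit_det_of_left_inverse hdd))

theorem inv_one_sub_diagonal_mul_mul_diagonal_inv {d : m → K} (hd : ∀ i, d i ≠ 0)
    (A : Matrix m m K) :
    (1 - diagonal d * A * diagonal d⁻¹)⁻¹ = diagonal d * (1 - A)⁻¹ * diagonal d⁻¹ := by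
  rw [one_sub_diagonal_mul_mul_diagonal_inv hd,
    inv_mul_mul_eq_of_mul_eq_one (diagonal_mul_diagonal_inv hd)]

end Matrix

theorem Real.sqrt_mul_reversal_mul_sqrt {p s t ρ : ℝ} (hp : 0 ≤ p) (hs : 0 ≤ s) (ht : 0 < t)
    (hρ : 0 < ρ) : √(p * (s * p / t / ρ)) * √ρ = √s * p / √t := by
  have hsq : p * (s * p / t / ρ) * ρ = (√s * p / √t) ^ 2 := by
    rw [div_pow, mul_pow, Real.sq_sqrt hs, Real.sq_sqrt ht.le]
    field_simp
  rw [← Real.sqrt_mul (by positivity), hsq, Real.sqrt_sq (by positivity)]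

theorem sum_mul_apply_div_pos {ι : Type*} [Fintype ι] {σ : ι → ℝ} {P : Matrix ι ι ℝ}
    (hσ : ∀ i, 0 < σ i) (hP : ∀ i j, 0 ≤ P i j) {y : ι} (hy : ∃ x, P x y ≠ 0) :
    0 < ∑ x, σ x * P x y / σ y := by
  obtain ⟨x, hx⟩ := hy
  exact Finset.sum_pos' (fun x _ => div_nonneg (mul_nonneg (hσ x).le (hP x y)) (hσ y).le)
    ⟨x, Finset.mem_univ x, div_pos (mul_pos (hσ x) ((hP x y).lt_of_ne' hx)) (hσ y)⟩

theorem stmt15_general (n : ℕ)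
    (P : Matrix (Fin n) (Fin n) ℝ)
    (hP0 : ∀ i j, 0 ≤ P i j) (hP1 : ∀ i, ∑ j, P i j = 1)
    (σ : Fin n → ℝ) (hσ0 : ∀ i, 0 < σ i)
    (hPcol : ∀ j, ∃ i, P i j ≠ 0)
    (r : Fin n → ℝ) (hr : ∀ y, r y = ∑ x, σ x * P x y / σ y)
    (Pstar : Matrix (Fin n) (Fin n) ℝ)
    (hPstar : ∀ y x, Pstar y x = (σ x * P x y / σ y) / r y)
    (𝒟 : Matrix (Fin n) (Fin n) ℝ)
    (h𝒟 : ∀ x y, 𝒟 x y = Real.sqrt (P x y * Pstar y x))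
    (M : Finset (Fin n))
    (Pm : Matrix {i : Fin n // i ∉ M} {i : Fin n // i ∉ M} ℝ)
    (hPm : Pm = P.submatrix Subtype.val Subtype.val)
    (hspec : ∀ μ ∈ spectrum ℂ (Pm.map (Complex.ofReal)), ‖μ‖ < 1)
    (Dm : Matrix {i : Fin n // i ∉ M} {i : Fin n // i ∉ M} ℝ)
    (hDm : Dm = 𝒟.submatrix Subtype.val Subtype.val)
    (Drhalf : Matrix {i : Fin n // i ∉ M} {i : Fin n // i ∉ M} ℝ)
    (hDrhalf : Drhalf = Matrix.diagonal (fun i => Real.sqrt (r i.1))) :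
    IsUnit (1 - Dm * Drhalf) ∧
    (∀ i j, 0 ≤ (1 - Dm * Drhalf)⁻¹ i j) ∧
    0 ≤ (fun i => Real.sqrt (σ i.1)) ⬝ᵥ
        ((1 - Dm * Drhalf)⁻¹ *ᵥ fun i => Real.sqrt (σ i.1)) := by
  set e : {i : Fin n // i ∉ M} → ℝ := fun i => √(σ i.1)
  have he : ∀ i, 0 < e i := fun i => Real.sqrt_pos.2 (hσ0 i.1)
  have he' : ∀ i, e i ≠ 0 := fun i => (he i).ne'
  have hr_pos : ∀ y, 0 < r y := fun y => hr y ▸ sum_mul_apply_div_pos hσ0 hP0 (hPcol y)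
  have hsim : Dm * Drhalf = diagonal e * Pm * diagonal e⁻¹ := by
    ext i j
    simp only [hDm, hDrhalf, hPm, mul_diagonal, diagonal_mul, submatrix_apply, h𝒟, hPstar,
      Pi.inv_apply, e]
    rw [Real.sqrt_mul_reversal_mul_sqrt (hP0 _ _) (hσ0 _).le (hσ0 _) (hr_pos _), div_eq_mul_inv]
  have hPm0 : ∀ i j, 0 ≤ Pm i j := fun i j => hPm ▸ hP0 i.1 j.1
  have hPm1 : ∀ i, ∑ j, Pm i j ≤ 1 := hPm ▸
    sum_submatrix_le_one hP0 (fun i => (hP1 i).le) Subtype.val_injective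
  have hunit : IsUnit (1 - Pm) :=
    isUnit_one_sub_of_one_notMem_spectrum_map fun h1 => by simpa using hspec 1 h1
  have hinv : ∀ i j, 0 ≤ (1 - Dm * Drhalf)⁻¹ i j := by
    intro i j
    rw [hsim, inv_one_sub_diagonal_mul_mul_diagonal_inv he', mul_diagonal, diagonal_mul]
    have hPm_inv := inv_one_sub_apply_nonneg_of_sum_le_one hPm0 hPm1 hunit i j
    exact mul_nonneg (mul_nonneg (he i).le hPm_inv) (inv_nonneg.2 (he j).le)
  refine ⟨hsim ▸ isUnit_one_sub_diagonal_mul_mul_diagonal_inv he' hunit, hinv, ?_⟩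
  exact dotProduct_nonneg_of_nonneg (fun i => (he i).le)
    fun i => dotProduct_nonneg_of_nonneg (hinv i) fun j => (he j).le

/-- In the generalized reversed-walk setup, with nonempty marked set
M ⊊ {1,…,n} and spectral radius of P_{−M} strictly less than 1, the matrix
I − 𝒟_{−M} D̂_r^{1/2} is an invertible M-matrix: its inverse is entrywise
nonnegative; consequently H_{σ,M} = √σ_{−M}ᵀ (I − 𝒟_{−M} D̂_r^{1/2})⁻¹ √σ_{−M} ≥ 0. -/
theorem stmt15 (n : ℕ) (hn : 0 < n)
    (P : Matrix (Fin n) (Fin n) ℝ)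
    (hP0 : ∀ i j, 0 ≤ P i j) (hP1 : ∀ i, ∑ j, P i j = 1)
    (σ : Fin n → ℝ) (hσ0 : ∀ i, 0 < σ i) (hσ1 : ∑ i, σ i = 1)
    (hPcol : ∀ j, ∃ i, P i j ≠ 0)
    (r : Fin n → ℝ) (hr : ∀ y, r y = ∑ x, σ x * P x y / σ y)
    (Pstar : Matrix (Fin n) (Fin n) ℝ)
    (hPstar : ∀ y x, Pstar y x = (σ x * P x y / σ y) / r y)
    (𝒟 : Matrix (Fin n) (Fin n) ℝ)
    (h𝒟 : ∀ x y, 𝒟 x y = Real.sqrt (P x y * Pstar y x))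
    (M : Finset (Fin n)) (hM : M.Nonempty) (hM' : M ≠ Finset.univ)
    (Pm : Matrix {i : Fin n // i ∉ M} {i : Fin n // i ∉ M} ℝ)
    (hPm : Pm = P.submatrix Subtype.val Subtype.val)
    (hspec : ∀ μ ∈ spectrum ℂ (Pm.map (Complex.ofReal)), ‖μ‖ < 1)
    (Dm : Matrix {i : Fin n // i ∉ M} {i : Fin n // i ∉ M} ℝ)
    (hDm : Dm = 𝒟.submatrix Subtype.val Subtype.val)
    (Drhalf : Matrix {i : Fin n // i ∉ M} {i : Fin n // i ∉ M} ℝ)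
    (hDrhalf : Drhalf = Matrix.diagonal (fun i => Real.sqrt (r i.1))) :
    IsUnit (1 - Dm * Drhalf) ∧
    (∀ i j, 0 ≤ (1 - Dm * Drhalf)⁻¹ i j) ∧
    0 ≤ (fun i => Real.sqrt (σ i.1)) ⬝ᵥ
        ((1 - Dm * Drhalf)⁻¹ *ᵥ fun i => Real.sqrt (σ i.1)) :=
  stmt15_general n P hP0 hP1 σ hσ0 hPcol r hr Pstar hPstar 𝒟 h𝒟 M Pm hPm hspec Dm hDm Drhalf hDrhalf
end

section
/- With the generalized quantum walk setup below, set p = Σ_{k∈M} σ_k. Let 𝒟_{−M} = S₀ Ξ T₀ᵀ be a real singular value decomposition of the principal submatrix of the generalized discriminant 𝒟 on unmarked indices (S₀, T₀ real orthogonal, Ξ diagonal with entries ξ_1,…,ξ_{n−m} ∈ [0,1]), assume ξ_k < 1 for all k, define θ̃_k ∈ (0, π/2] by cos θ̃_k = ξ_k, and set ν = S₀ᵀ √σ_{−M}. Then for every natural number T with T ≥ (64/(1−p)) Σ_{k=1}^{n−m} ν_k²/θ̃_k, one has F_σ(T) ≥ 1 − p; in particular the generalized quantum hitting time QH_{σ,M}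 := min{T ∈ ℕ : F_σ(T) ≥ 1 − p} satisfies QH_{σ,M} ≤ (64/(1−p)) Σ_{k=1}^{n−m} ν_k²/θ̃_k. -/
open Matrix

/-!
The walk `W̃ = R_B R_A` is a product of two reflections `R_A = 2ÃÃᴴ - 1`, `R_B = 2B̃B̃ᴴ - 1`,
and `ÃᴴB̃` restricted to the unmarked indices is the discriminant `𝒟_{-M} = S₀ Ξ T₀ᵀ`. With
`a_k = Ã S₀ e_k` and `b_k = B̃ T₀ e_k` one has `⟪a_k, a_l⟫ = ⟪b_k, b_l⟫ = δ_kl`,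
`⟪a_k, b_l⟫ = ξ_k δ_kl`, and the plane spanned by `a_k, b_k` is invariant: `a_k - e^{±iθ_k} b_k`
are eigenvectors of `W̃` for the eigenvalues `e^{±2iθ_k}`. These `2(n - m)` eigenvectors are
pairwise orthogonal, so Bessel's inequality bounds `‖W̃ᵗξ₀ - ξ₀‖²` below by
`Σ_k |e^{2iθ_k t} - 1|² ν_k²`, where `ν_k = ⟪a_k, ξ₀⟫`. Averaging over `t ≤ T`, a geometric sum
gives `Σ_t |e^{2iθt} - 1|² ≥ 2(T + 1) - 2 / sin θ ≥ 2(T + 1) - π / θ` (Jordan's inequality), hence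
`(T + 1) F_σ(T) ≥ 2(T + 1)(1 - p) - π Σ_k ν_k² / θ_k`, using `Σ_k ν_k² = Σ_{k ∉ M} σ_k = 1 - p`.
-/

section Isometry

variable {m n κ R : Type*} [Fintype m] [Fintype n] [CommRing R] [StarRing R]

lemma conjTranspose_mul_self_of_isometries [DecidableEq n] [DecidableEq κ] {A : Matrix m n R}
    {U : Matrix n κ R} (hA : Aᴴ * A = 1) (hU : Uᴴ * U = 1) : (A * U)ᴴ * (A * U) = 1 := by
  rw [conjTranspose_mul, Matrix.mul_assoc, ← Matrix.mul_assoc Aᴴ, hA, Matrix.one_mul, hU]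

lemma conjTranspose_mul_mul_of_mul_eq [Fintype κ] [DecidableEq κ] {A B : Matrix m n R}
    {U V : Matrix n κ R} {D : Matrix κ κ R} (hU : Uᴴ * U = 1) (hABV : Aᴴ * B * V = U * D) :
    (A * U)ᴴ * (B * V) = D := by
  rw [conjTranspose_mul, Matrix.mul_assoc, ← Matrix.mul_assoc Aᴴ, hABV, ← Matrix.mul_assoc, hU,
    Matrix.one_mul]

end Isometry

section Reflection

variable {m n R : Type*} [Fintype n] [DecidableEq m] [CommRing R] [StarRing R]

def reflection (A : Matrix m n R) : Matrix m m R := (2 : R) • (A * Aᴴ) - 1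

lemma conjTranspose_reflection (A : Matrix m n R) : (reflection A)ᴴ = reflection A := by
  simp [reflection, conjTranspose_sub]

variable [Fintype m]

lemma reflection_mul (A : Matrix m n R) {k : Type*} (X : Matrix m k R) :
    reflection A * X = (2 : R) • (A * (Aᴴ * X)) - X := by
  rw [reflection, Matrix.sub_mul, Matrix.smul_mul, Matrix.mul_assoc, Matrix.one_mul]

lemma reflection_mul_mul_of_mul_eq {κ : Type*} [Fintype κ] {A B : Matrix m n R}
    {U V : Matrix n κ R} {D : Matrix κ κ R} (hABV : Aᴴ * B * V = U * D) :
    reflection A * (B * V) = (2 : R) • (A * U * D) - B * V := by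
  rw [reflection_mul, ← Matrix.mul_assoc Aᴴ, hABV, Matrix.mul_assoc]

variable [DecidableEq n] {A B : Matrix m n R}

lemma reflection_mul_mul (hA : Aᴴ * A = 1) {k : Type*} (X : Matrix n k R) :
    reflection A * (A * X) = A * X := by
  rw [reflection_mul, ← Matrix.mul_assoc Aᴴ, hA, Matrix.one_mul, two_smul, add_sub_cancel_right]

lemma reflection_mul_self (hA : Aᴴ * A = 1) : reflection A * reflection A = 1 := by
  rw [reflection_mul, reflection, Matrix.mul_sub, Matrix.mul_smul, ← Matrix.mul_assoc Aᴴ, hA,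
    Matrix.one_mul, Matrix.mul_one, two_smul R Aᴴ, add_sub_cancel_right]
  module

lemma conjTranspose_mul_self_reflection_mul_reflection (hA : Aᴴ * A = 1) (hB : Bᴴ * B = 1) :
    (reflection B * reflection A)ᴴ * (reflection B * reflection A) = 1 := by
  rw [conjTranspose_mul, conjTranspose_reflection, conjTranspose_reflection, Matrix.mul_assoc,
    ← Matrix.mul_assoc (reflection B), reflection_mul_self hB, Matrix.one_mul,
    reflection_mul_self hA]

end Reflection

section Eigenvector

variable {ι R : Type*} [Fintype ι] [CommRing R]

lemma mul_mulVec_sub_smul_eq_sq_smul {Rₐ Rᵦ : Matrix ι ι R} {a b : ι → R} {ξ e : R}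
    (ha : Rₐ *ᵥ a = a) (hb : Rₐ *ᵥ b = (2 * ξ) • a - b)
    (hb' : Rᵦ *ᵥ b = b) (ha' : Rᵦ *ᵥ a = (2 * ξ) • b - a) (he : e ^ 2 - 2 * ξ * e + 1 = 0) :
    (Rᵦ * Rₐ) *ᵥ (a - e • b) = e ^ 2 • (a - e • b) := by
  have hₐ : Rₐ *ᵥ (a - e • b) = (1 - 2 * ξ * e) • a + e • b := by
    rw [mulVec_sub, mulVec_smul, ha, hb]
    module
  rw [← mulVec_mulVec, hₐ, mulVec_add, mulVec_smul, mulVec_smul, ha', hb']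
  match_scalars
  · linear_combination (e + 2 * ξ) * he
  · linear_combination -he

lemma dotProduct_pow_mulVec_of_mulVec_eq_smul [StarRing R] [DecidableEq ι] {U : Matrix ι ι R}
    (hU : Uᴴ * U = 1) {u : ι → R} {c : R} (hu : U *ᵥ u = c • u) (hc : star c * c = 1)
    (x : ι → R) (t : ℕ) : star u ⬝ᵥ (U ^ t *ᵥ x) = c ^ t * (star u ⬝ᵥ x) := by
  have step : ∀ y, star u ⬝ᵥ (U *ᵥ y) = c * (star u ⬝ᵥ y) := fun y => by
    calc star u ⬝ᵥ (U *ᵥ y) = c * star c * (star u ⬝ᵥ (U *ᵥ y)) := by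
          rw [mul_comm c, hc, one_mul]
      _ = c * (star (U *ᵥ u) ⬝ᵥ (U *ᵥ y)) := by
          rw [hu, star_smul, smul_dotProduct, smul_eq_mul, mul_assoc]
      _ = c * (star u ⬝ᵥ y) := by
          rw [star_mulVec, ← dotProduct_mulVec, mulVec_mulVec, hU, one_mulVec]
  induction t with
  | zero => simp
  | succ t ih => rw [pow_succ', ← mulVec_mulVec, step, ih, pow_succ', mul_assoc]

end Eigenvector

section ComplexEstimates

lemma sq_sub_two_re_mul_add_one {e : ℂ} (he : ‖e‖ = 1) : e ^ 2 - 2 * e.re * e + 1 = 0 := by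
  have h : star e * e = 1 := by
    rw [Complex.star_def, Complex.conj_mul', he]
    norm_num
  have h2 : e + star e = 2 * e.re := by
    rw [Complex.star_def, Complex.add_conj]
    push_cast
    ring
  linear_combination e * h2 - h

lemma norm_sub_star_mul_sq_add_norm_sub_mul_sq {ε : ℂ} (hε : ‖ε‖ = 1) (ν γ : ℂ) :
    ‖ν - star ε * γ‖ ^ 2 + ‖ν - ε * γ‖ ^ 2 = 2 * ε.im ^ 2 * ‖ν‖ ^ 2 + 2 * ‖ε.re * ν - γ‖ ^ 2 := by
  have h : ‖ε‖ ^ 2 = 1 := by rw [hε, one_pow]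
  rw [Complex.sq_norm, Complex.normSq_apply] at h
  simp only [Complex.sq_norm, Complex.normSq_apply, Complex.sub_re, Complex.sub_im,
    Complex.mul_re, Complex.mul_im, Complex.star_def, Complex.conj_re, Complex.conj_im,
    Complex.ofReal_re, Complex.ofReal_im]
  linear_combination 2 * (γ.re ^ 2 + γ.im ^ 2 - ν.re ^ 2 - ν.im ^ 2) * h

-- With `ν = ⟪a, x⟫`, `γ = ⟪b, x⟫`: the two Bessel terms of the eigenvectors `a - ε b`, `a - ε̄ b`.
lemma norm_pow_sub_one_sq_mul_le {ε : ℂ} (hε : ‖ε‖ = 1) (him : ε.im ≠ 0) (ν γ : ℂ) (t : ℕ) :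
    ‖(ε ^ 2) ^ t - 1‖ ^ 2 * ‖ν‖ ^ 2
      ≤ ‖((ε ^ 2) ^ t - 1) * (ν - star ε * γ)‖ ^ 2 / (2 * ε.im ^ 2)
        + ‖((star ε ^ 2) ^ t - 1) * (ν - ε * γ)‖ ^ 2 / (2 * ε.im ^ 2) := by
  have hconj : ‖(star ε ^ 2) ^ t - 1‖ = ‖(ε ^ 2) ^ t - 1‖ := by
    rw [← norm_star ((star ε ^ 2) ^ t - 1), star_sub, star_one, star_pow, star_pow, star_star]
  have him2 : 0 < 2 * ε.im ^ 2 := by positivity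
  rw [norm_mul, norm_mul, hconj, mul_pow, mul_pow, ← add_div, ← mul_add,
    norm_sub_star_mul_sq_add_norm_sub_mul_sq hε, le_div_iff₀ him2]
  nlinarith [mul_nonneg (sq_nonneg ‖(ε ^ 2) ^ t - 1‖) (sq_nonneg ‖ε.re * ν - γ‖)]

lemma sum_norm_dotProduct_sq_div_le {𝕜 ι κ : Type*} [RCLike 𝕜] [Fintype ι] [Fintype κ]
    [DecidableEq κ] {u : κ → ι → 𝕜} {c : κ → ℝ} (hc : ∀ i, 0 < c i)
    (hu : ∀ i j, star (u i) ⬝ᵥ u j = if i = j then (c i : 𝕜) else 0) (x : ι → 𝕜) :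
    ∑ i, ‖star (u i) ⬝ᵥ x‖ ^ 2 / c i ≤ ∑ q, ‖x q‖ ^ 2 := by
  set v : κ → EuclideanSpace 𝕜 ι := fun i => WithLp.toLp 2 (((√(c i))⁻¹ : 𝕜) • u i)
  have hinner : ∀ i (y : ι → 𝕜), inner 𝕜 (v i) (WithLp.toLp 2 y)
      = ((√(c i))⁻¹ : 𝕜) * (star (u i) ⬝ᵥ y) := fun i y => by
    rw [EuclideanSpace.inner_toLp_toLp, dotProduct_comm, star_smul, smul_dotProduct,
      smul_eq_mul, ← RCLike.ofReal_inv, RCLike.star_def, RCLike.conj_ofReal]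
  have hv : Orthonormal 𝕜 v := by
    rw [orthonormal_iff_ite]
    intro i j
    rw [hinner, dotProduct_smul, hu, smul_eq_mul]
    split_ifs with h
    · subst h
      rw [← RCLike.ofReal_inv, ← RCLike.ofReal_mul, ← RCLike.ofReal_mul, ← mul_assoc,
        ← mul_inv, Real.mul_self_sqrt (hc i).le, inv_mul_cancel₀ (hc i).ne', RCLike.ofReal_one]
    · simp
  calc ∑ i, ‖star (u i) ⬝ᵥ x‖ ^ 2 / c i = ∑ i, ‖inner 𝕜 (v i) (WithLp.toLp 2 x)‖ ^ 2 := by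
        refine Finset.sum_congr rfl fun i _ => ?_
        rw [hinner, norm_mul, mul_pow, ← RCLike.ofReal_inv, RCLike.norm_ofReal,
          abs_of_pos (inv_pos.2 (Real.sqrt_pos.2 (hc i))), inv_pow,
          Real.sq_sqrt (hc i).le, div_eq_inv_mul]
    _ ≤ ‖WithLp.toLp 2 x‖ ^ 2 := hv.sum_inner_products_le _
    _ = ∑ q, ‖x q‖ ^ 2 := EuclideanSpace.norm_sq_eq _

open Finset in
lemma norm_geom_sum_mul_norm_sub_one_le {z : ℂ} (hz : ‖z‖ = 1) (N : ℕ) :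
    ‖∑ t ∈ range N, z ^ t‖ * ‖z - 1‖ ≤ 2 := by
  rw [← norm_mul, geom_sum_mul]
  calc ‖z ^ N - 1‖ ≤ ‖z ^ N‖ + ‖(1 : ℂ)‖ := norm_sub_le _ _
    _ = 2 := by rw [norm_pow, hz, one_pow, norm_one, one_add_one_eq_two]

lemma norm_sub_one_sq_of_norm_eq_one {w : ℂ} (hw : ‖w‖ = 1) : ‖w - 1‖ ^ 2 = 2 - 2 * w.re := by
  have h : ‖w‖ ^ 2 = 1 := by rw [hw, one_pow]
  rw [Complex.sq_norm, Complex.normSq_apply] at h ⊢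
  simp only [Complex.sub_re, Complex.one_re, Complex.sub_im, Complex.one_im]
  linear_combination h

open Finset in
lemma two_mul_sub_le_sum_norm_pow_sub_one_sq {z : ℂ} (hz : ‖z‖ = 1) (hz1 : z ≠ 1) (N : ℕ) :
    2 * N - 4 / ‖z - 1‖ ≤ ∑ t ∈ range N, ‖z ^ t - 1‖ ^ 2 := by
  have hpos : 0 < ‖z - 1‖ := norm_pos_iff.2 (sub_ne_zero.2 hz1)
  have hsum : ∑ t ∈ range N, ‖z ^ t - 1‖ ^ 2 = 2 * N - 2 * (∑ t ∈ range N, z ^ t).re := by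
    rw [sum_congr rfl fun t _ => norm_sub_one_sq_of_norm_eq_one (by rw [norm_pow, hz, one_pow]),
      sum_sub_distrib, ← mul_sum, Complex.re_sum]
    simp [mul_comm]
  have hgeom : ‖∑ t ∈ range N, z ^ t‖ ≤ 2 / ‖z - 1‖ :=
    (le_div_iff₀ hpos).2 (norm_geom_sum_mul_norm_sub_one_le hz N)
  rw [hsum]
  linarith [Complex.re_le_norm (∑ t ∈ range N, z ^ t), show 4 / ‖z - 1‖ = 2 * (2 / ‖z - 1‖) by ring]

lemma two_mul_sub_pi_div_le_sum_norm_exp_sq_pow_sub_one_sq {θ : ℝ} (h0 : 0 < θ)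
    (hθ : θ ≤ Real.pi / 2) (N : ℕ) :
    2 * N - Real.pi / θ
      ≤ ∑ t ∈ Finset.range N, ‖(Complex.exp (θ * Complex.I) ^ 2) ^ t - 1‖ ^ 2 := by
  have hsin : 2 / Real.pi * θ ≤ Real.sin θ := Real.mul_le_sin h0.le hθ
  have hsin0 : 0 < Real.sin θ := lt_of_lt_of_le (by positivity) hsin
  have hnorm : ‖Complex.exp (θ * Complex.I) ^ 2 - 1‖ = 2 * Real.sin θ := by
    rw [← Complex.exp_nat_mul, show ((2 : ℕ) : ℂ) * (θ * Complex.I) = Complex.I * (2 * θ : ℝ) by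
      push_cast; ring, Complex.norm_exp_I_mul_ofReal_sub_one, mul_div_cancel_left₀ _ two_ne_zero,
      Real.norm_eq_abs, abs_of_pos (by positivity)]
  refine le_trans ?_ (two_mul_sub_le_sum_norm_pow_sub_one_sq ?_ ?_ N)
  · have : 4 / (2 * Real.sin θ) ≤ Real.pi / θ := by
      rw [div_le_div_iff₀ (by positivity) h0]
      nlinarith [mul_le_mul_of_nonneg_left hsin Real.pi_pos.le,
        show Real.pi * (2 / Real.pi * θ) = 2 * θ by field_simp]
    rw [hnorm]
    linarith
  · rw [norm_pow, Complex.norm_exp_ofReal_mul_I, one_pow]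
  · intro h
    rw [h, sub_self, norm_zero] at hnorm
    linarith

end ComplexEstimates

section SzegedyWalk

variable {ι κ : Type*} [Fintype ι]

def walkEigvec (𝒜 ℬ : Matrix ι κ ℂ) (ε : κ → ℂ) (i : κ × Bool) : ι → ℂ :=
  𝒜ᵀ i.1 - (bif i.2 then ε i.1 else star (ε i.1)) • ℬᵀ i.1

variable {𝒜 ℬ : Matrix ι κ ℂ} {ε : κ → ℂ} {ξ : κ → ℝ}

lemma star_transpose_dotProduct_transpose (X Y : Matrix ι κ ℂ) (k l : κ) :
    star (Xᵀ k) ⬝ᵥ Yᵀ l = (Xᴴ * Y) k l := rfl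

lemma star_walkEigvec_dotProduct (x : ι → ℂ) (i : κ × Bool) :
    star (walkEigvec 𝒜 ℬ ε i) ⬝ᵥ x
      = (𝒜ᴴ *ᵥ x) i.1 - star (bif i.2 then ε i.1 else star (ε i.1)) * (ℬᴴ *ᵥ x) i.1 := by
  rw [walkEigvec, star_sub, star_smul, sub_dotProduct, smul_dotProduct, smul_eq_mul]
  rfl

lemma mulVec_walkEigvec [Fintype κ] [DecidableEq κ] {Rₐ Rᵦ : Matrix ι ι ℂ} (hRₐ𝒜 : Rₐ * 𝒜 = 𝒜)
    (hRₐℬ : Rₐ * ℬ = (2 : ℂ) • (𝒜 * diagonal fun k => (ξ k : ℂ)) - ℬ) (hRᵦℬ : Rᵦ * ℬ = ℬ)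
    (hRᵦ𝒜 : Rᵦ * 𝒜 = (2 : ℂ) • (ℬ * diagonal fun k => (ξ k : ℂ)) - 𝒜)
    (hε : ∀ k, ‖ε k‖ = 1) (hεξ : ∀ k, (ε k).re = ξ k) (i : κ × Bool) :
    (Rᵦ * Rₐ) *ᵥ walkEigvec 𝒜 ℬ ε i
      = (bif i.2 then ε i.1 else star (ε i.1)) ^ 2 • walkEigvec 𝒜 ℬ ε i := by
  obtain ⟨k, s⟩ := i
  have hcol : ∀ (R : Matrix ι ι ℂ) (X Y : Matrix ι κ ℂ),
      R * X = (2 : ℂ) • (Y * diagonal fun k => (ξ k : ℂ)) - X →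
      R *ᵥ Xᵀ k = (2 * (ξ k : ℂ)) • Yᵀ k - Xᵀ k := fun R X Y h => by
    change (R * X)ᵀ k = _
    ext q
    simp [h]
    ring
  refine mul_mulVec_sub_smul_eq_sq_smul (congrArg (fun X => Xᵀ k) hRₐ𝒜) (hcol _ _ _ hRₐℬ)
    (congrArg (fun X => Xᵀ k) hRᵦℬ) (hcol _ _ _ hRᵦ𝒜) ?_
  cases s
  · simpa [hεξ] using sq_sub_two_re_mul_add_one ((norm_star (ε k)).trans (hε k))
  · simpa [hεξ] using sq_sub_two_re_mul_add_one (hε k)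

lemma dotProduct_walkEigvec [DecidableEq κ] (h𝒜 : 𝒜ᴴ * 𝒜 = 1) (hℬ : ℬᴴ * ℬ = 1)
    (h𝒜ℬ : 𝒜ᴴ * ℬ = diagonal fun k => (ξ k : ℂ)) (hε : ∀ k, ‖ε k‖ = 1)
    (hεξ : ∀ k, (ε k).re = ξ k) (i j : κ × Bool) :
    star (walkEigvec 𝒜 ℬ ε i) ⬝ᵥ walkEigvec 𝒜 ℬ ε j
      = if i = j then ((2 * (ε i.1).im ^ 2 : ℝ) : ℂ) else 0 := by
  obtain ⟨k, s⟩ := i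
  obtain ⟨l, s'⟩ := j
  have hℬ𝒜 : ℬᴴ * 𝒜 = diagonal fun k => (ξ k : ℂ) := by
    rw [← conjTranspose_conjTranspose 𝒜, ← conjTranspose_mul, h𝒜ℬ, diagonal_conjTranspose]
    simp
  simp only [walkEigvec, star_sub, star_smul, sub_dotProduct, dotProduct_sub, smul_dotProduct,
    dotProduct_smul, star_transpose_dotProduct_transpose, h𝒜, hℬ, h𝒜ℬ, hℬ𝒜, one_apply,
    diagonal_apply, Prod.mk.injEq]
  by_cases hkl : k = l
  · subst hkl
    have h : ‖ε k‖ ^ 2 = 1 := by rw [hε, one_pow]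
    rw [Complex.sq_norm, Complex.normSq_apply] at h
    simp only [← hεξ]
    cases s <;> cases s' <;> apply Complex.ext <;> simp [pow_two] <;> linarith
  · simp [hkl]

theorem sum_norm_pow_sub_one_sq_mul_le_of_isometries [DecidableEq ι] [Fintype κ] [DecidableEq κ]
    {m : Type*} [Fintype m] [DecidableEq m]
    {A B : Matrix ι m ℂ} {U V : Matrix m κ ℂ}
    (hA : Aᴴ * A = 1) (hB : Bᴴ * B = 1) (hU : Uᴴ * U = 1) (hV : Vᴴ * V = 1)
    (hABV : Aᴴ * B * V = U * diagonal fun k => (ξ k : ℂ))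
    (hBAU : Bᴴ * A * U = V * diagonal fun k => (ξ k : ℂ))
    (hε : ∀ k, ‖ε k‖ = 1) (hεξ : ∀ k, (ε k).re = ξ k) (hεim : ∀ k, (ε k).im ≠ 0)
    (x : ι → ℂ) (t : ℕ) :
    ∑ k, ‖(ε k ^ 2) ^ t - 1‖ ^ 2 * ‖((A * U)ᴴ *ᵥ x) k‖ ^ 2
      ≤ ∑ q, ‖((reflection B * reflection A) ^ t *ᵥ x - x) q‖ ^ 2 := by
  set W := reflection B * reflection A
  set u := walkEigvec (A * U) (B * V) ε
  have hu := mulVec_walkEigvec (reflection_mul_mul hA U) (reflection_mul_mul_of_mul_eq hABV)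
    (reflection_mul_mul hB V) (reflection_mul_mul_of_mul_eq hBAU) hε hεξ
  have he : ∀ i : κ × Bool, ‖bif i.2 then ε i.1 else star (ε i.1)‖ = 1 := fun i => by
    cases i.2 <;> simp [hε]
  have hinner : ∀ i : κ × Bool, star (u i) ⬝ᵥ (W ^ t *ᵥ x - x)
      = (((bif i.2 then ε i.1 else star (ε i.1)) ^ 2) ^ t - 1)
        * (((A * U)ᴴ *ᵥ x) i.1 - star (bif i.2 then ε i.1 else star (ε i.1))
          * ((B * V)ᴴ *ᵥ x) i.1) := fun i => by
    rw [dotProduct_sub, dotProduct_pow_mulVec_of_mulVec_eq_smul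
      (conjTranspose_mul_self_reflection_mul_reflection hA hB) (hu i)
      (by rw [star_pow, ← mul_pow, Complex.star_def, Complex.conj_mul', ← Complex.star_def, he]
          norm_num),
      sub_one_mul, star_walkEigvec_dotProduct]
  have hbessel := sum_norm_dotProduct_sq_div_le (u := u) (c := fun i => 2 * (ε i.1).im ^ 2)
    (fun i => by have := hεim i.1; positivity)
    (dotProduct_walkEigvec (conjTranspose_mul_self_of_isometries hA hU)
      (conjTranspose_mul_self_of_isometries hB hV) (conjTranspose_mul_mul_of_mul_eq hU hABV)
      hε hεξ) (W ^ t *ᵥ x - x)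
  calc ∑ k, ‖(ε k ^ 2) ^ t - 1‖ ^ 2 * ‖((A * U)ᴴ *ᵥ x) k‖ ^ 2
      ≤ ∑ k, ∑ s, ‖star (u (k, s)) ⬝ᵥ (W ^ t *ᵥ x - x)‖ ^ 2 / (2 * (ε k).im ^ 2) :=
        Finset.sum_le_sum fun k _ => by
          rw [Fintype.sum_bool, hinner, hinner]
          simp only [cond_true, cond_false, star_star]
          exact norm_pow_sub_one_sq_mul_le (hε k) (hεim k) _ _ t
    _ = ∑ i : κ × Bool, ‖star (u i) ⬝ᵥ (W ^ t *ᵥ x - x)‖ ^ 2 / (2 * (ε i.1).im ^ 2) := by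
        rw [Fintype.sum_prod_type]
    _ ≤ _ := hbessel

end SzegedyWalk

section UnmarkedInclusion

variable {ι : Type*} (R : Type*) [DecidableEq ι] [CommRing R] (M : Finset ι)

def unmarkedInclusion : Matrix ι {i // i ∉ M} R := (1 : Matrix ι ι R).submatrix id Subtype.val

variable {R M} [Fintype ι]

lemma unmarkedInclusion_mul_apply {κ : Type*} (Y : Matrix {i // i ∉ M} κ R) (x : ι) (k : κ) :
    (unmarkedInclusion R M * Y) x k = if h : x ∈ M then 0 else Y ⟨x, h⟩ k := by
  split_ifs with hx
  · refine Finset.sum_eq_zero fun i _ => ?_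
    simp [unmarkedInclusion, show x ≠ i.1 from fun h => i.2 (h ▸ hx)]
  · rw [mul_apply, Fintype.sum_eq_single ⟨x, hx⟩]
    · simp [unmarkedInclusion, one_apply]
    · intro i hi
      simp [unmarkedInclusion, one_apply, show x ≠ i.1 from fun h => hi (Subtype.ext h.symm)]

lemma mul_unmarkedInclusion {D : Matrix ι ι R} (hD : ∀ x ∈ M, ∀ y ∉ M, D x y = 0) :
    D * unmarkedInclusion R M
      = unmarkedInclusion R M * D.submatrix ((↑) : {i // i ∉ M} → ι) (↑) := by
  ext x k
  rw [unmarkedInclusion_mul_apply]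
  split_ifs with hx
  · simp [unmarkedInclusion, mul_apply, one_apply, hD x hx k.1 k.2]
  · simp [unmarkedInclusion, mul_apply, one_apply]

variable [StarRing R]

lemma conjTranspose_unmarkedInclusion_mul_self :
    (unmarkedInclusion R M)ᴴ * unmarkedInclusion R M = 1 := by
  ext k l
  simp [unmarkedInclusion, mul_apply, one_apply, Subtype.ext_iff]

lemma conjTranspose_unmarkedInclusion_mulVec (y : ι → R) :
    (unmarkedInclusion R M)ᴴ *ᵥ y = fun k => y k.1 := by
  ext k
  simp [unmarkedInclusion, mulVec, dotProduct, one_apply, apply_ite star]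

end UnmarkedInclusion

lemma conjTranspose_submatrix_swap_mul_self {ι n R : Type*} [Fintype ι] [CommRing R] [StarRing R]
    (X : Matrix (ι × ι) n R) :
    (X.submatrix Prod.swap id)ᴴ * X.submatrix Prod.swap id = Xᴴ * X := by
  rw [conjTranspose_submatrix]
  exact submatrix_mul_equiv Xᴴ X id (Equiv.prodComm ι ι) id

section MarkedWalk

variable {ι : Type*} [Fintype ι] [DecidableEq ι]

/-- The isometry `Ã` of the paper; `B̃` is `(markedIsometry 𝒫* M).submatrix Prod.swap id`. -/
noncomputable def markedIsometry (Q : Matrix ι ι ℝ) (M : Finset ι) : Matrix (ι × ι) ι ℂ :=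
  of fun q x => if x ∈ M then (if q = (x, x) then 1 else 0)
    else if q.1 = x then (√(Q q.1 q.2) : ℂ) else 0

lemma conjTranspose_markedIsometry_mul_self {Q : Matrix ι ι ℝ} (hQ0 : ∀ i j, 0 ≤ Q i j)
    (hQ1 : ∀ i, ∑ j, Q i j = 1) (M : Finset ι) :
    (markedIsometry Q M)ᴴ * markedIsometry Q M = 1 := by
  ext x y
  rcases eq_or_ne x y with rfl | hxy
  · by_cases hx : x ∈ M
    · simp [mul_apply, markedIsometry, hx]
    · simp [mul_apply, markedIsometry, hx, Fintype.sum_prod_type, ← Complex.ofReal_mul,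
        Real.mul_self_sqrt (hQ0 _ _), ← Complex.ofReal_sum, hQ1]
  · by_cases hx : x ∈ M <;> by_cases hy : y ∈ M <;>
      simp [mul_apply, markedIsometry, hx, hy, hxy, hxy.symm, Fintype.sum_prod_type]

lemma conjTranspose_markedIsometry_mul_swap {P Q : Matrix ι ι ℝ} (hP0 : ∀ i j, 0 ≤ P i j)
    (M : Finset ι) :
    (markedIsometry P M)ᴴ * (markedIsometry Q M).submatrix Prod.swap id
      = of fun x y => if x ∈ M ∨ y ∈ M then (if x = y then 1 else 0)
          else (√(P x y * Q y x) : ℂ) := by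
  ext x y
  rcases eq_or_ne x y with rfl | hxy
  · by_cases hx : x ∈ M <;>
      simp [mul_apply, markedIsometry, hx, Fintype.sum_prod_type, ite_and,
        apply_ite (starRingEnd ℂ), Real.sqrt_mul (hP0 _ _)]
  · by_cases hx : x ∈ M <;> by_cases hy : y ∈ M <;>
      simp [mul_apply, markedIsometry, hx, hy, hxy, hxy.symm, Fintype.sum_prod_type, ite_and,
        apply_ite (starRingEnd ℂ), Real.sqrt_mul (hP0 _ _)]

lemma conjTranspose_markedIsometry_mulVec_of_notMem {P : Matrix ι ι ℝ} (hP0 : ∀ i j, 0 ≤ P i j)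
    (hP1 : ∀ i, ∑ j, P i j = 1) {σ : ι → ℝ} (hσ : ∀ i, 0 ≤ σ i) {M : Finset ι} {x : ι}
    (hx : x ∉ M) :
    ((markedIsometry P M)ᴴ *ᵥ fun q => (√(σ q.1 * P q.1 q.2) : ℂ)) x = √(σ x) := by
  have h : ∀ y, √(P x y) * √(σ x * P x y) = √(σ x) * P x y := fun y => by
    rw [Real.sqrt_mul (hσ x), mul_left_comm, Real.mul_self_sqrt (hP0 x y)]
  simp only [mulVec, dotProduct, markedIsometry, hx, Fintype.sum_prod_type, conjTranspose_apply,
    of_apply, if_false, apply_ite star, star_zero, ite_mul, zero_mul]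
  simp [← Complex.ofReal_mul, h]
  rw [← Complex.ofReal_sum, ← Finset.mul_sum, hP1, mul_one]

lemma conjTranspose_map_ofReal_mul_self {n : Type*} [Fintype n] [DecidableEq n]
    {S : Matrix n n ℝ} (hS : S * Sᵀ = 1) :
    (S.map Complex.ofRealHom)ᴴ * S.map Complex.ofRealHom = 1 := by
  rw [← conjTranspose_map (Complex.ofRealHom : ℝ → ℂ) fun _ => (Complex.conj_ofReal _).symm,
    conjTranspose_eq_transpose_of_trivial, ← Matrix.map_mul, mul_eq_one_comm.mp (by simpa using hS),
    Matrix.map_one _ (map_zero _) (map_one _)]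

lemma conjTranspose_markedWalk_mulVec {P : Matrix ι ι ℝ} (hP0 : ∀ i j, 0 ≤ P i j)
    (hP1 : ∀ i, ∑ j, P i j = 1) {σ : ι → ℝ} (hσ : ∀ i, 0 ≤ σ i) {M : Finset ι}
    (S₀ : Matrix {i // i ∉ M} {i // i ∉ M} ℝ) :
    (markedIsometry P M * (unmarkedInclusion ℂ M * S₀.map Complex.ofRealHom))ᴴ
        *ᵥ (fun q => (√(σ q.1 * P q.1 q.2) : ℂ))
      = fun k => ((S₀ᵀ *ᵥ fun i => √(σ i.1)) k : ℂ) := by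
  rw [conjTranspose_mul, conjTranspose_mul, ← mulVec_mulVec, ← mulVec_mulVec,
    conjTranspose_unmarkedInclusion_mulVec]
  have h : (fun k : {i // i ∉ M} => ((markedIsometry P M)ᴴ
      *ᵥ fun q => (√(σ q.1 * P q.1 q.2) : ℂ)) k.1) = fun k => (√(σ k.1) : ℂ) :=
    funext fun k => conjTranspose_markedIsometry_mulVec_of_notMem hP0 hP1 hσ k.2
  ext k
  rw [h, ← conjTranspose_map (Complex.ofRealHom : ℝ → ℂ) fun _ => (Complex.conj_ofReal _).symm,
    conjTranspose_eq_transpose_of_trivial]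
  exact (RingHom.map_mulVec Complex.ofRealHom _ _ k).symm

theorem sum_norm_pow_sub_one_sq_mul_le_markedWalk {P Q : Matrix ι ι ℝ} (hP0 : ∀ i j, 0 ≤ P i j)
    (hP1 : ∀ i, ∑ j, P i j = 1) (hQ0 : ∀ i j, 0 ≤ Q i j) (hQ1 : ∀ i, ∑ j, Q i j = 1)
    {M : Finset ι} {S₀ T₀ : Matrix {i // i ∉ M} {i // i ∉ M} ℝ} (hS₀ : S₀ * S₀ᵀ = 1)
    (hT₀ : T₀ * T₀ᵀ = 1) {ξ : {i // i ∉ M} → ℝ}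
    (hsvd : (of fun x y => √(P x y * Q y x)).submatrix ((↑) : {i // i ∉ M} → ι) (↑)
      = S₀ * diagonal ξ * T₀ᵀ)
    {θ : {i // i ∉ M} → ℝ} (hθ0 : ∀ k, 0 < θ k) (hθ : ∀ k, θ k ≤ Real.pi / 2)
    (hcos : ∀ k, Real.cos (θ k) = ξ k) (x : ι × ι → ℂ) (t : ℕ) :
    ∑ k, ‖(Complex.exp (θ k * Complex.I) ^ 2) ^ t - 1‖ ^ 2
        * ‖((markedIsometry P M * (unmarkedInclusion ℂ M * S₀.map Complex.ofRealHom))ᴴ *ᵥ x) k‖ ^ 2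
      ≤ ∑ q, ‖((reflection ((markedIsometry Q M).submatrix Prod.swap id)
          * reflection (markedIsometry P M)) ^ t *ᵥ x - x) q‖ ^ 2 := by
  set A := markedIsometry P M
  set B := (markedIsometry Q M).submatrix Prod.swap id
  set J := unmarkedInclusion ℂ M
  set Dm := (of fun x y => √(P x y * Q y x)).submatrix
    (Subtype.val : {i // i ∉ M} → ι) (Subtype.val : {i // i ∉ M} → ι)
  have hD : Aᴴ * B = of fun x y => if x ∈ M ∨ y ∈ M then (if x = y then 1 else 0)
      else (√(P x y * Q y x) : ℂ) := conjTranspose_markedIsometry_mul_swap hP0 M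
  have hDJ : Aᴴ * B * J = J * Dm.map Complex.ofRealHom := by
    rw [mul_unmarkedInclusion (D := Aᴴ * B) fun x hx y hy => ?_]
    · congr 1
      ext k l
      simp [hD, k.2, l.2, Dm]
    · simp [hD, hx, show x ≠ y from fun h => hy (h ▸ hx)]
  have hDJ' : Bᴴ * A * J = J * Dmᵀ.map Complex.ofRealHom := by
    rw [show Bᴴ * A = (Aᴴ * B)ᴴ by rw [conjTranspose_mul, conjTranspose_conjTranspose],
      mul_unmarkedInclusion (D := (Aᴴ * B)ᴴ) fun x hx y hy => ?_]
    · congr 1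
      ext k l
      simp [hD, k.2, l.2, Dm]
    · simp [hD, hx, show y ≠ x from fun h => hy (h ▸ hx)]
  have hDT : Dm * T₀ = S₀ * diagonal ξ := by
    rw [hsvd, Matrix.mul_assoc, mul_eq_one_comm.mp hT₀, Matrix.mul_one]
  have hDS : Dmᵀ * S₀ = T₀ * diagonal ξ := by
    rw [hsvd, transpose_mul, transpose_mul, transpose_transpose, diagonal_transpose,
      Matrix.mul_assoc, Matrix.mul_assoc, mul_eq_one_comm.mp hS₀, Matrix.mul_one]
  have hξ : (diagonal ξ).map Complex.ofRealHom = diagonal fun k => (ξ k : ℂ) := by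
    simp [diagonal_map]
  refine sum_norm_pow_sub_one_sq_mul_le_of_isometries
    (conjTranspose_markedIsometry_mul_self hP0 hP1 M)
    ((conjTranspose_submatrix_swap_mul_self _).trans
      (conjTranspose_markedIsometry_mul_self hQ0 hQ1 M))
    (conjTranspose_mul_self_of_isometries conjTranspose_unmarkedInclusion_mul_self
      (conjTranspose_map_ofReal_mul_self hS₀))
    (conjTranspose_mul_self_of_isometries conjTranspose_unmarkedInclusion_mul_self
      (conjTranspose_map_ofReal_mul_self hT₀))
    ?_ ?_ (fun k => Complex.norm_exp_ofReal_mul_I _)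
    (fun k => by rw [Complex.exp_ofReal_mul_I_re, hcos]) (fun k => ?_) x t
  · rw [← Matrix.mul_assoc, hDJ, Matrix.mul_assoc, ← Matrix.map_mul, hDT, Matrix.map_mul, hξ,
      Matrix.mul_assoc]
  · rw [← Matrix.mul_assoc, hDJ', Matrix.mul_assoc, ← Matrix.map_mul, hDS, Matrix.map_mul, hξ,
      Matrix.mul_assoc]
  · rw [Complex.exp_ofReal_mul_I_im]
    exact (Real.sin_pos_of_pos_of_lt_pi (hθ0 k) (by linarith [hθ k, Real.pi_pos])).ne'

end MarkedWalk

lemma timeReversal_nonneg_and_sum_eq_one {ι : Type*} [Fintype ι] {P : Matrix ι ι ℝ}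
    (hP0 : ∀ i j, 0 ≤ P i j) {σ : ι → ℝ} (hσ0 : ∀ i, 0 < σ i) (hPcol : ∀ j, ∃ i, P i j ≠ 0)
    {r : ι → ℝ} (hr : ∀ y, r y = ∑ x, σ x * P x y / σ y) {Pstar : Matrix ι ι ℝ}
    (hPstar : ∀ y x, Pstar y x = (σ x * P x y / σ y) / r y) :
    (∀ y x, 0 ≤ Pstar y x) ∧ ∀ y, ∑ x, Pstar y x = 1 := by
  have hr0 : ∀ y, 0 < r y := fun y => by
    obtain ⟨x, hx⟩ := hPcol y
    rw [hr]
    exact Finset.sum_pos' (fun i _ => by have := hσ0 i; have := hσ0 y; have := hP0 i y; positivity)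
      ⟨x, Finset.mem_univ _, by
        have := hσ0 x; have := hσ0 y; have := (hP0 x y).lt_of_ne' hx; positivity⟩
  refine ⟨fun y x => ?_, fun y => ?_⟩
  · rw [hPstar]
    have := hσ0 x; have := hσ0 y; have := hP0 x y; have := hr0 y
    positivity
  · rw [Finset.sum_congr rfl fun x _ => hPstar y x, ← Finset.sum_div, ← hr y,
      div_self (hr0 y).ne']

lemma sum_mulVec_transpose_sq {n : Type*} [Fintype n] [DecidableEq n] {S : Matrix n n ℝ}
    (hS : S * Sᵀ = 1) (v : n → ℝ) : ∑ k, (Sᵀ *ᵥ v) k ^ 2 = ∑ k, v k ^ 2 := by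
  simp only [sq]
  change (Sᵀ *ᵥ v) ⬝ᵥ (Sᵀ *ᵥ v) = v ⬝ᵥ v
  rw [dotProduct_mulVec, vecMul_transpose, mulVec_mulVec, hS, one_mulVec]

lemma sum_subtype_notMem_eq_sub {ι : Type*} [Fintype ι] [DecidableEq ι] (σ : ι → ℝ)
    (M : Finset ι) : ∑ k : {i // i ∉ M}, σ k = ∑ i, σ i - ∑ i ∈ M, σ i := by
  rw [← Finset.sum_compl_add_sum M, ← Finset.sum_subtype Mᶜ fun _ => Finset.mem_compl]
  ring

lemma sum_subtype_notMem_pos {ι : Type*} [Fintype ι] [DecidableEq ι] {σ : ι → ℝ} (hσ : ∀ i, 0 < σ i)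
    {M : Finset ι} (hM : M ≠ Finset.univ) : 0 < ∑ k : {i // i ∉ M}, σ k := by
  obtain ⟨i, hi⟩ : ∃ i, i ∉ M := by
    by_contra! h
    exact hM (Finset.eq_univ_of_forall h)
  exact Finset.sum_pos (fun k _ => hσ k) ⟨⟨i, hi⟩, Finset.mem_univ _⟩

lemma two_mul_sum_sq_sub_pi_mul_le_sum_range {κ : Type*} [Fintype κ] {θ ν : κ → ℝ}
    (hθ0 : ∀ k, 0 < θ k) (hθ : ∀ k, θ k ≤ Real.pi / 2) {f : ℕ → ℝ}
    (hf : ∀ t, ∑ k, ‖(Complex.exp (θ k * Complex.I) ^ 2) ^ t - 1‖ ^ 2 * ν k ^ 2 ≤ f t) (N : ℕ) :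
    2 * N * ∑ k, ν k ^ 2 - Real.pi * ∑ k, ν k ^ 2 / θ k ≤ ∑ t ∈ Finset.range N, f t := by
  calc 2 * N * ∑ k, ν k ^ 2 - Real.pi * ∑ k, ν k ^ 2 / θ k
      = ∑ k, (2 * N - Real.pi / θ k) * ν k ^ 2 := by
        rw [Finset.mul_sum, Finset.mul_sum, ← Finset.sum_sub_distrib]
        exact Finset.sum_congr rfl fun k _ => by ring
    _ ≤ ∑ k, (∑ t ∈ Finset.range N, ‖(Complex.exp (θ k * Complex.I) ^ 2) ^ t - 1‖ ^ 2)
          * ν k ^ 2 :=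
        Finset.sum_le_sum fun k _ => mul_le_mul_of_nonneg_right
          (two_mul_sub_pi_div_le_sum_norm_exp_sq_pow_sub_one_sq (hθ0 k) (hθ k) N) (sq_nonneg _)
    _ = ∑ t ∈ Finset.range N, ∑ k, ‖(Complex.exp (θ k * Complex.I) ^ 2) ^ t - 1‖ ^ 2 * ν k ^ 2 := by
        simp_rw [Finset.sum_mul]
        exact Finset.sum_comm
    _ ≤ ∑ t ∈ Finset.range N, f t := Finset.sum_le_sum fun t _ => hf t

lemma hitting_time_bound {F : ℕ → ℝ} {c S : ℝ} (hc : 0 < c) (hS : 0 ≤ S)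
    (hF : ∀ T : ℕ, 2 * (T + 1) * c - Real.pi * S ≤ (T + 1) * F T) :
    (∀ T : ℕ, (T : ℝ) ≥ 64 / c * S → F T ≥ c) ∧
      ((sInf {T : ℕ | F T ≥ c} : ℕ) : ℝ) ≤ 64 / c * S := by
  have hit : ∀ T : ℕ, 64 * S < (T + 1) * c → F T ≥ c := fun T hT => by
    have h := hF T
    have : (0 : ℝ) < T + 1 := by positivity
    nlinarith [Real.pi_le_four]
  have hB : 0 ≤ 64 / c * S := by positivity
  have hcB : 64 / c * S * c = 64 * S := by field_simp
  refine ⟨fun T hT => hit T (by nlinarith), ?_⟩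
  calc ((sInf {T : ℕ | F T ≥ c} : ℕ) : ℝ) ≤ ⌊64 / c * S⌋₊ := by
        exact_mod_cast Nat.sInf_le (hit _ (by nlinarith [Nat.lt_floor_add_one (64 / c * S)]))
    _ ≤ 64 / c * S := Nat.floor_le hB

theorem stmt19_general (n : ℕ)
    (P : Matrix (Fin n) (Fin n) ℝ)
    (hP0 : ∀ i j, 0 ≤ P i j) (hP1 : ∀ i, ∑ j, P i j = 1)
    (σ : Fin n → ℝ) (hσ0 : ∀ i, 0 < σ i) (hσ1 : ∑ i, σ i = 1)
    (hPcol : ∀ j, ∃ i, P i j ≠ 0)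
    (r : Fin n → ℝ) (hr : ∀ y, r y = ∑ x, σ x * P x y / σ y)
    (Pstar : Matrix (Fin n) (Fin n) ℝ)
    (hPstar : ∀ y x, Pstar y x = (σ x * P x y / σ y) / r y)
    (𝒟 : Matrix (Fin n) (Fin n) ℝ)
    (h𝒟 : ∀ x y, 𝒟 x y = Real.sqrt (P x y * Pstar y x))
    (M : Finset (Fin n)) (hM' : M ≠ Finset.univ)
    (Atil Btil : Matrix (Fin n × Fin n) (Fin n) ℂ)
    (hAtil : ∀ q x', Atil q x' = if x' ∈ M then (if q = (x', x') then 1 else 0)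
        else (if q.1 = x' then (Real.sqrt (P q.1 q.2) : ℂ) else 0))
    (hBtil : ∀ q y', Btil q y' = if y' ∈ M then (if q = (y', y') then 1 else 0)
        else (if q.2 = y' then (Real.sqrt (Pstar q.2 q.1) : ℂ) else 0))
    (Wtil : Matrix (Fin n × Fin n) (Fin n × Fin n) ℂ)
    (hWtil : Wtil = ((2 : ℂ) • (Btil * Btilᴴ) - 1) * ((2 : ℂ) • (Atil * Atilᴴ) - 1))
    (ξ₀ : Fin n × Fin n → ℂ)
    (hξ₀ : ∀ q, ξ₀ q = (Real.sqrt (σ q.1 * P q.1 q.2) : ℂ))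
    (Fσ : ℕ → ℝ)
    (hFσ : ∀ T, Fσ T = (1 / ((T : ℝ) + 1)) * ∑ t ∈ Finset.range (T + 1),
        ∑ q, ‖((Wtil ^ t) *ᵥ ξ₀ - ξ₀) q‖ ^ 2)
    (p : ℝ) (hp : p = ∑ k ∈ M, σ k)
    (Dm : Matrix {i : Fin n // i ∉ M} {i : Fin n // i ∉ M} ℝ)
    (hDm : Dm = 𝒟.submatrix Subtype.val Subtype.val)
    (S₀ T₀ : Matrix {i : Fin n // i ∉ M} {i : Fin n // i ∉ M} ℝ)
    (hS₀ : S₀ * S₀ᵀ = 1) (hT₀ : T₀ * T₀ᵀ = 1)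
    (ξ : {i : Fin n // i ∉ M} → ℝ)
    (hsvd : Dm = S₀ * Matrix.diagonal ξ * T₀ᵀ)
    (θ : {i : Fin n // i ∉ M} → ℝ)
    (hθ : ∀ k, 0 < θ k ∧ θ k ≤ Real.pi / 2)
    (hcos : ∀ k, Real.cos (θ k) = ξ k)
    (ν : {i : Fin n // i ∉ M} → ℝ)
    (hν : ν = S₀ᵀ *ᵥ fun i => Real.sqrt (σ i.1)) :
    (∀ T : ℕ, (T : ℝ) ≥ 64 / (1 - p) * ∑ k, ν k ^ 2 / θ k → Fσ T ≥ 1 - p) ∧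
    ((↑(sInf {T : ℕ | Fσ T ≥ 1 - p}) : ℝ) ≤ 64 / (1 - p) * ∑ k, ν k ^ 2 / θ k) := by
  obtain ⟨hPs0, hPs1⟩ := timeReversal_nonneg_and_sum_eq_one hP0 hσ0 hPcol hr hPstar
  obtain rfl : Atil = markedIsometry P M := by ext q x; simp [hAtil, markedIsometry]
  obtain rfl : Btil = (markedIsometry Pstar M).submatrix Prod.swap id := by
    ext q y; simp [hBtil, markedIsometry, Prod.ext_iff, and_comm]
  have hsvd' : (of fun x y => √(P x y * Pstar y x)).submatrix ((↑) : {i // i ∉ M} → Fin n) (↑)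
      = S₀ * diagonal ξ * T₀ᵀ := by
    rw [← hsvd, hDm]; ext; simp [h𝒟]
  have hσM : ∑ k : {i // i ∉ M}, σ k = 1 - p := by rw [sum_subtype_notMem_eq_sub, hσ1, hp]
  have hνsq : ∑ k, ν k ^ 2 = 1 - p := by
    simp [hν, sum_mulVec_transpose_sq hS₀, Real.sq_sqrt (hσ0 _).le, hσM]
  have hwalk : ∀ t, ∑ k, ‖(Complex.exp (θ k * Complex.I) ^ 2) ^ t - 1‖ ^ 2 * ν k ^ 2
      ≤ ∑ q, ‖(Wtil ^ t *ᵥ ξ₀ - ξ₀) q‖ ^ 2 := fun t => by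
    have h := sum_norm_pow_sub_one_sq_mul_le_markedWalk hP0 hP1 hPs0 hPs1 hS₀ hT₀ hsvd'
      (fun k => (hθ k).1) (fun k => (hθ k).2) hcos ξ₀ t
    rw [funext hξ₀] at h ⊢
    simp only [conjTranspose_markedWalk_mulVec hP0 hP1 (fun i => (hσ0 i).le), Complex.norm_real,
      Real.norm_eq_abs, sq_abs] at h
    rwa [hWtil, hν]
  refine hitting_time_bound (hσM ▸ sum_subtype_notMem_pos hσ0 hM')
    (Finset.sum_nonneg fun k _ => div_nonneg (sq_nonneg _) (hθ k).1.le) fun T => ?_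
  have h := two_mul_sum_sq_sub_pi_mul_le_sum_range (fun k => (hθ k).1) (fun k => (hθ k).2)
    hwalk (T + 1)
  rw [hFσ, ← hνsq, ← mul_assoc, mul_one_div_cancel (by positivity), one_mul]
  push_cast at h
  exact h

/-- generalized quantum hitting time bound. With the generalized
Szegedy walk setup (distribution σ in place of π), p = Σ_{k∈M} σ_k, real SVD
𝒟_{−M} = S₀ Ξ T₀ᵀ with singular values ξ_k ∈ [0,1), angles θ̃_k ∈ (0, π/2] with
cos θ̃_k = ξ_k, and ν = S₀ᵀ√σ_{−M}: every natural T with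
T ≥ (64/(1−p)) Σ_k ν_k²/θ̃_k satisfies F_σ(T) ≥ 1 − p; in particular
QH_{σ,M} = min{T : F_σ(T) ≥ 1 − p} ≤ (64/(1−p)) Σ_k ν_k²/θ̃_k. -/
theorem stmt19 (n : ℕ) (hn : 0 < n)
    (P : Matrix (Fin n) (Fin n) ℝ)
    (hP0 : ∀ i j, 0 ≤ P i j) (hP1 : ∀ i, ∑ j, P i j = 1)
    (σ : Fin n → ℝ) (hσ0 : ∀ i, 0 < σ i) (hσ1 : ∑ i, σ i = 1)
    (hPcol : ∀ j, ∃ i, P i j ≠ 0)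
    (r : Fin n → ℝ) (hr : ∀ y, r y = ∑ x, σ x * P x y / σ y)
    (Pstar : Matrix (Fin n) (Fin n) ℝ)
    (hPstar : ∀ y x, Pstar y x = (σ x * P x y / σ y) / r y)
    (𝒟 : Matrix (Fin n) (Fin n) ℝ)
    (h𝒟 : ∀ x y, 𝒟 x y = Real.sqrt (P x y * Pstar y x))
    (M : Finset (Fin n)) (hM : M.Nonempty) (hM' : M ≠ Finset.univ)
    (Atil Btil : Matrix (Fin n × Fin n) (Fin n) ℂ)
    (hAtil : ∀ q x', Atil q x' = if x' ∈ M then (if q = (x', x') then 1 else 0)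
        else (if q.1 = x' then (Real.sqrt (P q.1 q.2) : ℂ) else 0))
    (hBtil : ∀ q y', Btil q y' = if y' ∈ M then (if q = (y', y') then 1 else 0)
        else (if q.2 = y' then (Real.sqrt (Pstar q.2 q.1) : ℂ) else 0))
    (Wtil : Matrix (Fin n × Fin n) (Fin n × Fin n) ℂ)
    (hWtil : Wtil = ((2 : ℂ) • (Btil * Btilᴴ) - 1) * ((2 : ℂ) • (Atil * Atilᴴ) - 1))
    (ξ₀ : Fin n × Fin n → ℂ)
    (hξ₀ : ∀ q, ξ₀ q = (Real.sqrt (σ q.1 * P q.1 q.2) : ℂ))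
    (Fσ : ℕ → ℝ)
    (hFσ : ∀ T, Fσ T = (1 / ((T : ℝ) + 1)) * ∑ t ∈ Finset.range (T + 1),
        ∑ q, ‖((Wtil ^ t) *ᵥ ξ₀ - ξ₀) q‖ ^ 2)
    (p : ℝ) (hp : p = ∑ k ∈ M, σ k)
    (Dm : Matrix {i : Fin n // i ∉ M} {i : Fin n // i ∉ M} ℝ)
    (hDm : Dm = 𝒟.submatrix Subtype.val Subtype.val)
    (S₀ T₀ : Matrix {i : Fin n // i ∉ M} {i : Fin n // i ∉ M} ℝ)
    (hS₀ : S₀ * S₀ᵀ = 1) (hT₀ : T₀ * T₀ᵀ = 1)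
    (ξ : {i : Fin n // i ∉ M} → ℝ)
    (hsvd : Dm = S₀ * Matrix.diagonal ξ * T₀ᵀ)
    (hξ : ∀ k, 0 ≤ ξ k ∧ ξ k < 1)
    (θ : {i : Fin n // i ∉ M} → ℝ)
    (hθ : ∀ k, 0 < θ k ∧ θ k ≤ Real.pi / 2)
    (hcos : ∀ k, Real.cos (θ k) = ξ k)
    (ν : {i : Fin n // i ∉ M} → ℝ)
    (hν : ν = S₀ᵀ *ᵥ fun i => Real.sqrt (σ i.1)) :
    (∀ T : ℕ, (T : ℝ) ≥ 64 / (1 - p) * ∑ k, ν k ^ 2 / θ k → Fσ T ≥ 1 - p) ∧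
    ((↑(sInf {T : ℕ | Fσ T ≥ 1 - p}) : ℝ) ≤ 64 / (1 - p) * ∑ k, ν k ^ 2 / θ k) :=
  stmt19_general n P hP0 hP1 σ hσ0 hσ1 hPcol r hr Pstar hPstar 𝒟 h𝒟 M hM' Atil Btil hAtil hBtil Wtil
    hWtil ξ₀ hξ₀ Fσ hFσ p hp Dm hDm S₀ T₀ hS₀ hT₀ ξ hsvd θ hθ hcos ν hν
end
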